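/- arXiv:1207.7140 — 2 statements merged into one kernel-verified Lean document; each statement's English description precedes it below -/
import Mathlib

section
/- Let d ≥ 1, α ∈ (0,2), ε ∈ (0,α) and set V_ε(x) = (1/2) log( (1+|x|²)^{d+ε} ). For n ≥ 1, let f_n : ℝ^d → [0,1] be smooth with f_n = 0 on {|x| ≤ 3n}, f_n = 1 on {|x| > 4n}, and |∇f_n| ≤ 2/n. Then there is a constant C > 0 independent of n such that ∬ (f_n(y) - f_n(x))² |y-x|^{-(d+α)} e^{-V_ε(y)} dy e^{-V_ε(x)} dx ≤ C n^{-(d+α+ε)}. -/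
open MeasureTheory Real Set Filter Metric
open scoped ENNReal

namespace Stmt13Aux

noncomputable def Vr (d : ℕ) : ℝ :=
  (volume (ball (0 : EuclideanSpace ℝ (Fin d)) 1)).toReal

lemma Vr_nonneg (d : ℕ) : 0 ≤ Vr d := ENNReal.toReal_nonneg

lemma volume_closedBall_eq (d : ℕ) {R : ℝ} (hR : 0 ≤ R) :
    volume (closedBall (0 : EuclideanSpace ℝ (Fin d)) R)
      = ENNReal.ofReal (Vr d * R ^ (d : ℝ)) := by
  rw [Measure.addHaar_closedBall _ _ hR, finrank_euclideanSpace_fin]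
  rw [show volume (ball (0 : EuclideanSpace ℝ (Fin d)) 1) = ENNReal.ofReal (Vr d) from
    (ENNReal.ofReal_toReal measure_ball_lt_top.ne).symm]
  rw [← ENNReal.ofReal_mul (by positivity), Real.rpow_natCast, mul_comm]

lemma exists_dyadic_up {R t : ℝ} (hR : 0 < R) (h : R < t) :
    ∃ k : ℕ, 2 ^ k * R ≤ t ∧ t ≤ 2 ^ (k + 1) * R := by
  have ht : (1 : ℝ) < t / R := (one_lt_div hR).mpr h
  have ht0 : (0 : ℝ) < t / R := lt_trans one_pos ht
  refine ⟨⌊Real.logb 2 (t / R)⌋₊, ?_, ?_⟩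
  · have h1 : (⌊Real.logb 2 (t / R)⌋₊ : ℝ) ≤ Real.logb 2 (t / R) :=
      Nat.floor_le (Real.logb_nonneg one_lt_two ht.le)
    have h2 : (2:ℝ) ^ (⌊Real.logb 2 (t / R)⌋₊ : ℝ) ≤ 2 ^ Real.logb 2 (t / R) :=
      Real.rpow_le_rpow_of_exponent_le one_le_two h1
    rw [Real.rpow_logb two_pos (by norm_num) ht0, Real.rpow_natCast] at h2
    calc (2:ℝ) ^ ⌊Real.logb 2 (t / R)⌋₊ * R ≤ (t / R) * R := by
          exact mul_le_mul_of_nonneg_right h2 hR.le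
      _ = t := by field_simp
  · have h1 : Real.logb 2 (t / R) < (⌊Real.logb 2 (t / R)⌋₊ : ℝ) + 1 :=
      Nat.lt_floor_add_one _
    have h2 : (2:ℝ) ^ Real.logb 2 (t / R) < 2 ^ ((⌊Real.logb 2 (t / R)⌋₊ : ℝ) + 1) :=
      Real.rpow_lt_rpow_of_exponent_lt one_lt_two h1
    rw [Real.rpow_logb two_pos (by norm_num) ht0] at h2
    have h3 : (2:ℝ) ^ ((⌊Real.logb 2 (t / R)⌋₊ : ℝ) + 1)
        = 2 ^ (⌊Real.logb 2 (t / R)⌋₊ + 1) := by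
      rw [← Real.rpow_natCast 2 (⌊Real.logb 2 (t / R)⌋₊ + 1)]
      push_cast; ring_nf
    rw [h3] at h2
    calc t = (t / R) * R := by field_simp
      _ ≤ 2 ^ (⌊Real.logb 2 (t / R)⌋₊ + 1) * R := mul_le_mul_of_nonneg_right h2.le hR.le

lemma exists_dyadic_down {R t : ℝ} (ht : 0 < t) (h : t ≤ R) :
    ∃ k : ℕ, R / 2 ^ (k + 1) ≤ t ∧ t ≤ R / 2 ^ k := by
  have hR : (0:ℝ) < R := lt_of_lt_of_le ht h
  have ht1 : (1:ℝ) ≤ R / t := (one_le_div ht).mpr h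
  have ht0 : (0:ℝ) < R / t := lt_of_lt_of_le one_pos ht1
  refine ⟨⌊Real.logb 2 (R / t)⌋₊, ?_, ?_⟩
  · have h1 : Real.logb 2 (R / t) < (⌊Real.logb 2 (R / t)⌋₊ : ℝ) + 1 :=
      Nat.lt_floor_add_one _
    have h2 : (2:ℝ) ^ Real.logb 2 (R / t) < 2 ^ ((⌊Real.logb 2 (R / t)⌋₊ : ℝ) + 1) :=
      Real.rpow_lt_rpow_of_exponent_lt one_lt_two h1
    rw [Real.rpow_logb two_pos (by norm_num) ht0] at h2
    have h3 : (2:ℝ) ^ ((⌊Real.logb 2 (R / t)⌋₊ : ℝ) + 1)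
        = 2 ^ (⌊Real.logb 2 (R / t)⌋₊ + 1) := by
      rw [← Real.rpow_natCast 2 (⌊Real.logb 2 (R / t)⌋₊ + 1)]
      push_cast; ring_nf
    rw [h3] at h2
    rw [div_le_iff₀ (by positivity)]
    calc R = (R / t) * t := by field_simp
      _ ≤ 2 ^ (⌊Real.logb 2 (R / t)⌋₊ + 1) * t := mul_le_mul_of_nonneg_right h2.le ht.le
      _ = t * 2 ^ (⌊Real.logb 2 (R / t)⌋₊ + 1) := by ring
  · have h1 : (⌊Real.logb 2 (R / t)⌋₊ : ℝ) ≤ Real.logb 2 (R / t) :=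
      Nat.floor_le (Real.logb_nonneg one_lt_two ht1)
    have h2 : (2:ℝ) ^ (⌊Real.logb 2 (R / t)⌋₊ : ℝ) ≤ 2 ^ Real.logb 2 (R / t) :=
      Real.rpow_le_rpow_of_exponent_le one_le_two h1
    rw [Real.rpow_logb two_pos (by norm_num) ht0, Real.rpow_natCast] at h2
    rw [le_div_iff₀ (by positivity)]
    calc t * 2 ^ ⌊Real.logb 2 (R / t)⌋₊ ≤ t * (R / t) := by
          exact mul_le_mul_of_nonneg_left h2 ht.le
      _ = R := by field_simp

lemma pow_calc_tail (D s R : ℝ) (hR : 0 < R) (k : ℕ) :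
    ((2:ℝ) ^ k * R) ^ (-s) * ((2:ℝ) ^ (k + 1) * R) ^ D
      = 2 ^ D * R ^ (D - s) * ((2:ℝ) ^ (D - s)) ^ k := by
  have h2 : (0:ℝ) ≤ 2 := by norm_num
  rw [Real.mul_rpow (by positivity) hR.le, Real.mul_rpow (by positivity) hR.le,
    ← Real.rpow_natCast 2 k, ← Real.rpow_natCast 2 (k + 1),
    ← Real.rpow_natCast ((2:ℝ) ^ (D - s)) k,
    ← Real.rpow_mul h2, ← Real.rpow_mul h2, ← Real.rpow_mul h2]
  push_cast
  calc (2:ℝ) ^ ((k:ℝ) * (-s)) * R ^ (-s) * (2 ^ (((k:ℝ) + 1) * D) * R ^ D)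
      = (2:ℝ) ^ ((k:ℝ) * (-s) + ((k:ℝ) + 1) * D) * R ^ (-s + D) := by
        rw [Real.rpow_add two_pos, Real.rpow_add hR]; ring
    _ = (2:ℝ) ^ (D + (D - s) * (k:ℝ)) * R ^ (D - s) := by
        rw [show (k:ℝ) * (-s) + ((k:ℝ) + 1) * D = D + (D - s) * (k:ℝ) by ring,
          show -s + D = D - s by ring]
    _ = 2 ^ D * R ^ (D - s) * 2 ^ ((D - s) * (k:ℝ)) := by
        rw [Real.rpow_add two_pos]; ring

lemma pow_calc_ball (D s R : ℝ) (hR : 0 < R) (k : ℕ) :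
    (R / 2 ^ k) ^ (-s) * (R / 2 ^ k) ^ D
      = R ^ (D - s) * ((2:ℝ) ^ (s - D)) ^ k := by
  have h2 : (0:ℝ) ≤ 2 := by norm_num
  have hb : (0:ℝ) < R / 2 ^ k := by positivity
  rw [← Real.rpow_add hb, Real.div_rpow hR.le (by positivity),
    ← Real.rpow_natCast 2 k, ← Real.rpow_natCast ((2:ℝ) ^ (s - D)) k,
    ← Real.rpow_mul h2, ← Real.rpow_mul h2,
    show -s + D = D - s by ring]
  rw [div_eq_mul_inv, ← Real.rpow_neg (by positivity)]
  rw [show -((k:ℝ) * (D - s)) = (s - D) * (k:ℝ) by ring]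

lemma tail_bound (d : ℕ) {s R : ℝ} (hs : (d : ℝ) < s) (hR : 0 < R) :
    (∫⁻ y : EuclideanSpace ℝ (Fin d),
        {y : EuclideanSpace ℝ (Fin d) | R < ‖y‖}.indicator
          (fun y => ENNReal.ofReal (‖y‖ ^ (-s))) y)
      ≤ ENNReal.ofReal ((Vr d * 2 ^ (d:ℝ) * (1 - 2 ^ ((d:ℝ) - s))⁻¹) * R ^ ((d:ℝ) - s)) := by
  set D : ℝ := (d:ℝ)
  have ha0 : (0:ℝ) < 2 ^ (D - s) := Real.rpow_pos_of_pos two_pos _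
  have ha1 : (2:ℝ) ^ (D - s) < 1 :=
    Real.rpow_lt_one_of_one_lt_of_neg one_lt_two (by simp [D]; linarith)
  calc (∫⁻ y : EuclideanSpace ℝ (Fin d),
        {y : EuclideanSpace ℝ (Fin d) | R < ‖y‖}.indicator
          (fun y => ENNReal.ofReal (‖y‖ ^ (-s))) y)
      ≤ ∫⁻ y : EuclideanSpace ℝ (Fin d), ∑' k : ℕ,
          (closedBall (0 : EuclideanSpace ℝ (Fin d)) (2 ^ (k+1) * R)).indicator
            (fun _ => ENNReal.ofReal (((2:ℝ) ^ k * R) ^ (-s))) y := by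
        apply lintegral_mono
        intro y
        by_cases hy : R < ‖y‖
        · obtain ⟨k, hk1, hk2⟩ := exists_dyadic_up hR hy
          rw [Set.indicator_of_mem (by exact hy)]
          refine le_trans ?_ (ENNReal.le_tsum k)
          rw [Set.indicator_of_mem (by simpa [mem_closedBall_zero_iff] using hk2)]
          exact ENNReal.ofReal_le_ofReal
            (Real.rpow_le_rpow_of_nonpos (by positivity) hk1 (by have h0 : (0:ℝ) ≤ D := Nat.cast_nonneg d; linarith))
        · have hy' : y ∉ {y : EuclideanSpace ℝ (Fin d) | R < ‖y‖} := hy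
          exact le_trans (le_of_eq (Set.indicator_of_notMem hy' _)) (zero_le)
    _ = ∑' k : ℕ, ∫⁻ y : EuclideanSpace ℝ (Fin d),
          (closedBall (0 : EuclideanSpace ℝ (Fin d)) (2 ^ (k+1) * R)).indicator
            (fun _ => ENNReal.ofReal (((2:ℝ) ^ k * R) ^ (-s))) y := by
        exact lintegral_tsum fun k =>
          (measurable_const.indicator measurableSet_closedBall).aemeasurable
    _ = ∑' k : ℕ, ENNReal.ofReal (Vr d * 2 ^ D * R ^ (D - s))
          * (ENNReal.ofReal ((2:ℝ) ^ (D - s))) ^ k := by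
        congr 1; funext k
        rw [lintegral_indicator_const measurableSet_closedBall,
          volume_closedBall_eq d (by positivity),
          ← ENNReal.ofReal_pow ha0.le,
          ← ENNReal.ofReal_mul (mul_nonneg (mul_nonneg (Vr_nonneg d) (by positivity)) (by positivity)),
          ← ENNReal.ofReal_mul (by positivity)]
        congr 1
        calc ((2:ℝ) ^ k * R) ^ (-s) * (Vr d * ((2:ℝ) ^ (k+1) * R) ^ D)
            = Vr d * (((2:ℝ) ^ k * R) ^ (-s) * ((2:ℝ) ^ (k+1) * R) ^ D) := by ring
          _ = Vr d * (2 ^ D * R ^ (D - s) * ((2:ℝ) ^ (D - s)) ^ k) := by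
              rw [pow_calc_tail D s R hR k]
          _ = Vr d * 2 ^ D * R ^ (D - s) * ((2:ℝ) ^ (D - s)) ^ k := by ring
    _ = ENNReal.ofReal (Vr d * 2 ^ D * R ^ (D - s)) * (1 - ENNReal.ofReal ((2:ℝ) ^ (D - s)))⁻¹ := by
        rw [ENNReal.tsum_mul_left, ENNReal.tsum_geometric]
    _ = ENNReal.ofReal ((Vr d * 2 ^ D * (1 - 2 ^ (D - s))⁻¹) * R ^ (D - s)) := by
        rw [show (1 : ℝ≥0∞) - ENNReal.ofReal ((2:ℝ) ^ (D - s))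
            = ENNReal.ofReal (1 - (2:ℝ) ^ (D - s)) by
          rw [ENNReal.ofReal_sub _ ha0.le, ENNReal.ofReal_one],
          ← ENNReal.ofReal_inv_of_pos (by linarith),
          ← ENNReal.ofReal_mul (mul_nonneg (mul_nonneg (Vr_nonneg d) (by positivity)) (by positivity))]
        congr 1
        ring

lemma ball_bound (d : ℕ) (hd : 1 ≤ d) {s R : ℝ} (hs : s < (d : ℝ)) (hR : 0 < R) :
    (∫⁻ z : EuclideanSpace ℝ (Fin d),
        {z : EuclideanSpace ℝ (Fin d) | ‖z‖ ≤ R}.indicator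
          (fun z => ENNReal.ofReal (‖z‖ ^ (-s))) z)
      ≤ ENNReal.ofReal ((Vr d * ((2:ℝ) ^ s + 1) * (1 - 2 ^ (s - (d:ℝ)))⁻¹) * R ^ ((d:ℝ) - s)) := by
  set D : ℝ := (d:ℝ)
  have hD0 : (0:ℝ) ≤ D := Nat.cast_nonneg d
  have ha0 : (0:ℝ) < 2 ^ (s - D) := Real.rpow_pos_of_pos two_pos _
  have ha1 : (2:ℝ) ^ (s - D) < 1 :=
    Real.rpow_lt_one_of_one_lt_of_neg one_lt_two (by simp [D]; linarith)
  have hs2 : (0:ℝ) < 2 ^ s + 1 := by positivity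
  haveI : Nontrivial (EuclideanSpace ℝ (Fin d)) := by
    refine ⟨⟨0, EuclideanSpace.single (⟨0, hd⟩ : Fin d) (1:ℝ), fun h => ?_⟩⟩
    have := congrArg (fun v => v (⟨0, hd⟩ : Fin d)) h
    simp [EuclideanSpace.single_apply] at this
  have h0 : ∀ᵐ (z : EuclideanSpace ℝ (Fin d)) ∂volume, z ≠ 0 := by
    rw [ae_iff]
    simp only [not_not, setOf_eq_eq_singleton]
    exact measure_singleton 0
  calc (∫⁻ z : EuclideanSpace ℝ (Fin d),
        {z : EuclideanSpace ℝ (Fin d) | ‖z‖ ≤ R}.indicator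
          (fun z => ENNReal.ofReal (‖z‖ ^ (-s))) z)
      ≤ ∫⁻ z : EuclideanSpace ℝ (Fin d), ∑' k : ℕ,
          (closedBall (0 : EuclideanSpace ℝ (Fin d)) (R / 2 ^ k)).indicator
            (fun _ => ENNReal.ofReal (((2:ℝ) ^ s + 1) * (R / 2 ^ k) ^ (-s))) z := by
        apply lintegral_mono_ae
        filter_upwards [h0] with z hz
        by_cases hzR : ‖z‖ ≤ R
        · have hzn : 0 < ‖z‖ := norm_pos_iff.mpr hz
          obtain ⟨k, hk1, hk2⟩ := exists_dyadic_down hzn hzR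
          have hzmem : z ∈ {z : EuclideanSpace ℝ (Fin d) | ‖z‖ ≤ R} := hzR
          rw [Set.indicator_of_mem hzmem]
          refine le_trans ?_ (ENNReal.le_tsum k)
          rw [Set.indicator_of_mem (by simpa [mem_closedBall_zero_iff] using hk2)]
          apply ENNReal.ofReal_le_ofReal
          have hbk : (0:ℝ) < R / 2 ^ k := by positivity
          rcases le_or_gt 0 s with hss | hss
          · have h1 : ‖z‖ ^ (-s) ≤ (R / 2 ^ (k+1)) ^ (-s) :=
              Real.rpow_le_rpow_of_nonpos (by positivity) hk1 (by linarith)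
            have h2 : R / 2 ^ (k+1) = (R / 2 ^ k) / 2 := by rw [pow_succ]; ring
            have h3 : ((R / 2 ^ k) / 2) ^ (-s) = (R / 2 ^ k) ^ (-s) * 2 ^ s := by
              rw [Real.div_rpow hbk.le (by norm_num), Real.rpow_neg (by norm_num : (0:ℝ) ≤ 2),
                div_inv_eq_mul]
            have h4 : (0:ℝ) ≤ (R / 2 ^ k) ^ (-s) := Real.rpow_nonneg hbk.le _
            nlinarith [h1, h3, h2 ▸ h1]
          · have h1 : ‖z‖ ^ (-s) ≤ (R / 2 ^ k) ^ (-s) :=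
              Real.rpow_le_rpow (norm_nonneg z) hk2 (by linarith)
            have h4 : (0:ℝ) ≤ (R / 2 ^ k) ^ (-s) := Real.rpow_nonneg hbk.le _
            have h5 : (0:ℝ) ≤ 2 ^ s := le_of_lt (Real.rpow_pos_of_pos two_pos s)
            nlinarith
        · have hz' : z ∉ {z : EuclideanSpace ℝ (Fin d) | ‖z‖ ≤ R} := hzR
          exact le_trans (le_of_eq (Set.indicator_of_notMem hz' _)) (zero_le)
    _ = ∑' k : ℕ, ∫⁻ z : EuclideanSpace ℝ (Fin d),
          (closedBall (0 : EuclideanSpace ℝ (Fin d)) (R / 2 ^ k)).indicator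
            (fun _ => ENNReal.ofReal (((2:ℝ) ^ s + 1) * (R / 2 ^ k) ^ (-s))) z := by
        exact lintegral_tsum fun k =>
          (measurable_const.indicator measurableSet_closedBall).aemeasurable
    _ = ∑' k : ℕ, ENNReal.ofReal (Vr d * (2 ^ s + 1) * R ^ (D - s))
          * (ENNReal.ofReal ((2:ℝ) ^ (s - D))) ^ k := by
        congr 1; funext k
        rw [lintegral_indicator_const measurableSet_closedBall,
          volume_closedBall_eq d (by positivity),
          ← ENNReal.ofReal_pow ha0.le,
          ← ENNReal.ofReal_mul (mul_nonneg (mul_nonneg (Vr_nonneg d) hs2.le) (by positivity)),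
          ← ENNReal.ofReal_mul (by positivity)]
        congr 1
        have hbk : (0:ℝ) < R / 2 ^ k := by positivity
        calc ((2:ℝ) ^ s + 1) * (R / 2 ^ k) ^ (-s) * (Vr d * (R / 2 ^ k) ^ D)
            = Vr d * (2 ^ s + 1) * ((R / 2 ^ k) ^ (-s) * (R / 2 ^ k) ^ D) := by ring
          _ = Vr d * (2 ^ s + 1) * (R ^ (D - s) * ((2:ℝ) ^ (s - D)) ^ k) := by
              rw [pow_calc_ball D s R hR k]
          _ = Vr d * (2 ^ s + 1) * R ^ (D - s) * ((2:ℝ) ^ (s - D)) ^ k := by ring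
    _ = ENNReal.ofReal (Vr d * (2 ^ s + 1) * R ^ (D - s))
          * (1 - ENNReal.ofReal ((2:ℝ) ^ (s - D)))⁻¹ := by
        rw [ENNReal.tsum_mul_left, ENNReal.tsum_geometric]
    _ = ENNReal.ofReal ((Vr d * (2 ^ s + 1) * (1 - 2 ^ (s - D))⁻¹) * R ^ (D - s)) := by
        rw [show (1 : ℝ≥0∞) - ENNReal.ofReal ((2:ℝ) ^ (s - D))
            = ENNReal.ofReal (1 - (2:ℝ) ^ (s - D)) by
          rw [ENNReal.ofReal_sub _ ha0.le, ENNReal.ofReal_one],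
          ← ENNReal.ofReal_inv_of_pos (by linarith),
          ← ENNReal.ofReal_mul (mul_nonneg (mul_nonneg (Vr_nonneg d) hs2.le) (by positivity))]
        congr 1
        ring

noncomputable def w (d : ℕ) (ε : ℝ) (x : EuclideanSpace ℝ (Fin d)) : ℝ :=
  (1 + ‖x‖ ^ 2) ^ (-(((d:ℝ) + ε) / 2))

lemma one_add_sq_pos (x : EuclideanSpace ℝ (Fin d)) : (0:ℝ) < 1 + ‖x‖ ^ 2 := by positivity

lemma exp_eq_w (d : ℕ) (ε : ℝ) (x : EuclideanSpace ℝ (Fin d)) :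
    Real.exp (-((1:ℝ) / 2 * Real.log ((1 + ‖x‖ ^ 2) ^ ((d:ℝ) + ε)))) = w d ε x := by
  have h1 : (0:ℝ) < 1 + ‖x‖ ^ 2 := one_add_sq_pos x
  rw [Real.log_rpow h1, w, Real.rpow_def_of_pos h1]
  congr 1
  ring

lemma w_nonneg (d : ℕ) (ε : ℝ) (x : EuclideanSpace ℝ (Fin d)) : 0 ≤ w d ε x :=
  Real.rpow_nonneg (one_add_sq_pos x).le _

lemma w_le_one (d : ℕ) {ε : ℝ} (hε : 0 ≤ ε) (x : EuclideanSpace ℝ (Fin d)) : w d ε x ≤ 1 :=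
  Real.rpow_le_one_of_one_le_of_nonpos
    (le_add_of_nonneg_right (sq_nonneg _))
    (by have : (0:ℝ) ≤ (d:ℝ) := Nat.cast_nonneg d; linarith)

lemma w_le_rpow (d : ℕ) {ε : ℝ} (hε : 0 ≤ ε) {x : EuclideanSpace ℝ (Fin d)}
    (hx : 0 < ‖x‖) : w d ε x ≤ ‖x‖ ^ (-((d:ℝ) + ε)) := by
  have hD : (0:ℝ) ≤ (d:ℝ) := Nat.cast_nonneg d
  have h1 : w d ε x ≤ (‖x‖ ^ 2) ^ (-(((d:ℝ) + ε) / 2)) :=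
    Real.rpow_le_rpow_of_nonpos (by positivity) (le_add_of_nonneg_left one_pos.le)
      (by linarith)
  calc w d ε x ≤ (‖x‖ ^ 2) ^ (-(((d:ℝ) + ε) / 2)) := h1
    _ = ‖x‖ ^ (-((d:ℝ) + ε)) := by
        rw [← Real.rpow_natCast ‖x‖ 2, ← Real.rpow_mul (norm_nonneg x)]
        norm_num
        rw [show -(2 * (((d:ℝ) + ε) / 2)) = -ε + -(d:ℝ) by ring]

lemma w_le_J (d : ℕ) {ε : ℝ} (hε : 0 ≤ ε) (x : EuclideanSpace ℝ (Fin d)) :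
    w d ε x ≤ 2 ^ (((d:ℝ) + ε) / 2) * (1 + ‖x‖) ^ (-((d:ℝ) + ε)) := by
  have hD : (0:ℝ) ≤ (d:ℝ) := Nat.cast_nonneg d
  have hp : (0:ℝ) ≤ ((d:ℝ) + ε) / 2 := by linarith
  have h1 : ((1 + ‖x‖) ^ 2) / 2 ≤ 1 + ‖x‖ ^ 2 := by nlinarith [sq_nonneg (1 - ‖x‖)]
  have h2 : (0:ℝ) < ((1 + ‖x‖) ^ 2) / 2 := by positivity
  calc w d ε x ≤ (((1 + ‖x‖) ^ 2) / 2) ^ (-(((d:ℝ) + ε) / 2)) :=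
        Real.rpow_le_rpow_of_nonpos h2 h1 (by linarith)
    _ = 2 ^ (((d:ℝ) + ε) / 2) * (1 + ‖x‖) ^ (-((d:ℝ) + ε)) := by
        rw [Real.div_rpow (by positivity) (by norm_num),
          Real.rpow_neg (by norm_num : (0:ℝ) ≤ 2), div_inv_eq_mul,
          ← Real.rpow_natCast (1 + ‖x‖) 2, ← Real.rpow_mul (by positivity)]
        push_cast
        rw [show (2:ℝ) * -(((d:ℝ) + ε) / 2) = -((d:ℝ) + ε) by ring]
        ring

noncomputable def Cw (d : ℕ) (ε : ℝ) : ℝ :=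
  2 ^ (((d:ℝ) + ε) / 2) * ∫ x : EuclideanSpace ℝ (Fin d), (1 + ‖x‖) ^ (-((d:ℝ) + ε))

lemma Cw_nonneg (d : ℕ) (ε : ℝ) : 0 ≤ Cw d ε := by
  apply mul_nonneg (by positivity)
  apply integral_nonneg
  intro x
  positivity

lemma lintegral_w_le (d : ℕ) {ε : ℝ} (hε : 0 < ε) :
    (∫⁻ x : EuclideanSpace ℝ (Fin d), ENNReal.ofReal (w d ε x)) ≤ ENNReal.ofReal (Cw d ε) := by
  have hint : Integrable (fun x : EuclideanSpace ℝ (Fin d) => (1 + ‖x‖) ^ (-((d:ℝ) + ε))) :=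
    integrable_one_add_norm (by simp; linarith)
  have hint2 : Integrable (fun x : EuclideanSpace ℝ (Fin d) =>
      2 ^ (((d:ℝ) + ε) / 2) * (1 + ‖x‖) ^ (-((d:ℝ) + ε))) := hint.const_mul _
  calc (∫⁻ x : EuclideanSpace ℝ (Fin d), ENNReal.ofReal (w d ε x))
      ≤ ∫⁻ x : EuclideanSpace ℝ (Fin d),
          ENNReal.ofReal (2 ^ (((d:ℝ) + ε) / 2) * (1 + ‖x‖) ^ (-((d:ℝ) + ε))) :=
        lintegral_mono fun x => ENNReal.ofReal_le_ofReal (w_le_J d hε.le x)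
    _ = ENNReal.ofReal (∫ x : EuclideanSpace ℝ (Fin d),
          2 ^ (((d:ℝ) + ε) / 2) * (1 + ‖x‖) ^ (-((d:ℝ) + ε))) :=
        (ofReal_integral_eq_lintegral_ofReal hint2
          (Filter.Eventually.of_forall fun x => by positivity)).symm
    _ = ENNReal.ofReal (Cw d ε) := by rw [integral_const_mul]; rfl

noncomputable def tc (d : ℕ) (s : ℝ) : ℝ := Vr d * 2 ^ (d:ℝ) * (1 - 2 ^ ((d:ℝ) - s))⁻¹

noncomputable def bc (d : ℕ) (s : ℝ) : ℝ := Vr d * ((2:ℝ) ^ s + 1) * (1 - 2 ^ (s - (d:ℝ)))⁻¹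

lemma tc_nonneg (d : ℕ) {s : ℝ} (hs : (d:ℝ) < s) : 0 ≤ tc d s := by
  have h1 : (2:ℝ) ^ ((d:ℝ) - s) < 1 :=
    Real.rpow_lt_one_of_one_lt_of_neg one_lt_two (by linarith)
  have := Vr_nonneg d
  have h2 : (0:ℝ) ≤ (1 - 2 ^ ((d:ℝ) - s))⁻¹ := by
    apply inv_nonneg.mpr; linarith
  unfold tc; positivity

lemma bc_nonneg (d : ℕ) {s : ℝ} (hs : s < (d:ℝ)) : 0 ≤ bc d s := by
  have h1 : (2:ℝ) ^ (s - (d:ℝ)) < 1 :=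
    Real.rpow_lt_one_of_one_lt_of_neg one_lt_two (by linarith)
  have := Vr_nonneg d
  have h2 : (0:ℝ) ≤ (1 - 2 ^ (s - (d:ℝ)))⁻¹ := by
    apply inv_nonneg.mpr; linarith
  have h3 : (0:ℝ) ≤ (2:ℝ) ^ s + 1 := by positivity
  unfold bc; positivity

lemma tail_bound' (d : ℕ) {s R : ℝ} (hs : (d : ℝ) < s) (hR : 0 < R) :
    (∫⁻ y : EuclideanSpace ℝ (Fin d),
        {y : EuclideanSpace ℝ (Fin d) | R < ‖y‖}.indicator
          (fun y => ENNReal.ofReal (‖y‖ ^ (-s))) y)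
      ≤ ENNReal.ofReal (tc d s * R ^ ((d:ℝ) - s)) := tail_bound d hs hR

lemma ball_bound' (d : ℕ) (hd : 1 ≤ d) {s R : ℝ} (hs : s < (d : ℝ)) (hR : 0 < R) :
    (∫⁻ z : EuclideanSpace ℝ (Fin d),
        {z : EuclideanSpace ℝ (Fin d) | ‖z‖ ≤ R}.indicator
          (fun z => ENNReal.ofReal (‖z‖ ^ (-s))) z)
      ≤ ENNReal.ofReal (bc d s * R ^ ((d:ℝ) - s)) := ball_bound d hd hs hR

lemma indicator_ofReal_const_mul {β : Type*} (s : Set β) {c : ℝ} (hc : 0 ≤ c) (h : β → ℝ)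
    (y : β) :
    s.indicator (fun y => ENNReal.ofReal (c * h y)) y
      = ENNReal.ofReal c * s.indicator (fun y => ENNReal.ofReal (h y)) y := by
  by_cases hy : y ∈ s <;> simp [hy, ENNReal.ofReal_mul hc]

noncomputable def WW (d : ℕ) (ε : ℝ) : EuclideanSpace ℝ (Fin d) → ℝ≥0∞ :=
  fun x => ENNReal.ofReal (w d ε x)

lemma WW_meas (d : ℕ) (ε : ℝ) : Measurable (WW d ε) := by
  unfold WW w; fun_prop

noncomputable def gg1 (d : ℕ) (α ε : ℝ) (n : ℕ) : EuclideanSpace ℝ (Fin d) → ℝ≥0∞ :=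
  fun y => {y : EuclideanSpace ℝ (Fin d) | 3 * (n:ℝ) < ‖y‖}.indicator
    (fun y => ENNReal.ofReal ((3:ℝ) ^ (d:ℝ) * (n:ℝ) ^ (-α) * ‖y‖ ^ (-(2 * (d:ℝ) + ε)))) y

noncomputable def gg2 (d : ℕ) (α : ℝ) (n : ℕ) : EuclideanSpace ℝ (Fin d) → ℝ≥0∞ :=
  fun z => {z : EuclideanSpace ℝ (Fin d) | ‖z‖ ≤ (n:ℝ)}.indicator
    (fun z => ENNReal.ofReal (4 * (n:ℝ) ^ (-(2:ℝ)) * ‖z‖ ^ (-((d:ℝ) + α - 2)))) z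

noncomputable def gg3 (d : ℕ) (ε : ℝ) (n : ℕ) : EuclideanSpace ℝ (Fin d) → ℝ≥0∞ :=
  fun y => {y : EuclideanSpace ℝ (Fin d) | ‖y‖ ≤ (n:ℝ)}.indicator (WW d ε) y

noncomputable def gg4 (d : ℕ) (α : ℝ) (n : ℕ) : EuclideanSpace ℝ (Fin d) → ℝ≥0∞ :=
  fun z => {z : EuclideanSpace ℝ (Fin d) | (n:ℝ) < ‖z‖}.indicator
    (fun z => ENNReal.ofReal (‖z‖ ^ (-((d:ℝ) + α)))) z

noncomputable def uu1 (d : ℕ) (ε : ℝ) (n : ℕ) : EuclideanSpace ℝ (Fin d) → ℝ≥0∞ :=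
  fun x => {x : EuclideanSpace ℝ (Fin d) | ‖x‖ ≤ 2 * (n:ℝ)}.indicator (WW d ε) x

noncomputable def uu2 (d : ℕ) (ε : ℝ) (n : ℕ) : EuclideanSpace ℝ (Fin d) → ℝ≥0∞ :=
  fun x => ({x : EuclideanSpace ℝ (Fin d) | 2 * (n:ℝ) < ‖x‖} ∩
    {x : EuclideanSpace ℝ (Fin d) | ‖x‖ ≤ 5 * (n:ℝ)}).indicator (WW d ε) x

noncomputable def uu3 (d : ℕ) (α ε : ℝ) (n : ℕ) : EuclideanSpace ℝ (Fin d) → ℝ≥0∞ :=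
  fun x => {x : EuclideanSpace ℝ (Fin d) | 5 * (n:ℝ) < ‖x‖}.indicator
    (fun x => ENNReal.ofReal ((5:ℝ) ^ ((d:ℝ) + α) * ‖x‖ ^ (-(2 * (d:ℝ) + α + ε)))) x

lemma meas_norm_lt (d : ℕ) (c : ℝ) :
    MeasurableSet {y : EuclideanSpace ℝ (Fin d) | c < ‖y‖} :=
  measurableSet_lt measurable_const measurable_norm

lemma meas_norm_le (d : ℕ) (c : ℝ) :
    MeasurableSet {y : EuclideanSpace ℝ (Fin d) | ‖y‖ ≤ c} :=
  measurableSet_le measurable_norm measurable_const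

lemma meas_gg1 (d : ℕ) (α ε : ℝ) (n : ℕ) : Measurable (gg1 d α ε n) :=
  Measurable.indicator (by fun_prop) (meas_norm_lt d _)

lemma meas_gg2 (d : ℕ) (α : ℝ) (n : ℕ) : Measurable (gg2 d α n) :=
  Measurable.indicator (by fun_prop) (meas_norm_le d _)

lemma meas_gg3 (d : ℕ) (ε : ℝ) (n : ℕ) : Measurable (gg3 d ε n) :=
  Measurable.indicator (WW_meas d ε) (meas_norm_le d _)

lemma meas_gg4 (d : ℕ) (α : ℝ) (n : ℕ) : Measurable (gg4 d α n) :=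
  Measurable.indicator (by fun_prop) (meas_norm_lt d _)

lemma meas_uu1 (d : ℕ) (ε : ℝ) (n : ℕ) : Measurable (uu1 d ε n) :=
  Measurable.indicator (WW_meas d ε) (meas_norm_le d _)

lemma meas_uu2 (d : ℕ) (ε : ℝ) (n : ℕ) : Measurable (uu2 d ε n) :=
  Measurable.indicator (WW_meas d ε) ((meas_norm_lt d _).inter (meas_norm_le d _))

lemma meas_uu3 (d : ℕ) (α ε : ℝ) (n : ℕ) : Measurable (uu3 d α ε n) :=
  Measurable.indicator (by fun_prop) (meas_norm_lt d _)

section IntBounds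

variable {d n : ℕ} {α ε : ℝ}

lemma I1_bound (hα0 : 0 < α) (hε0 : 0 < ε) (hn : 1 ≤ n) :
    (∫⁻ y, gg1 d α ε n y)
      ≤ ENNReal.ofReal (((3:ℝ) ^ (d:ℝ) * tc d (2 * (d:ℝ) + ε) * 3 ^ (-((d:ℝ) + ε)))
          * (n:ℝ) ^ (-α + -((d:ℝ) + ε))) := by
  have hN0 : (0:ℝ) < (n:ℝ) := by exact_mod_cast Nat.lt_of_lt_of_le Nat.zero_lt_one hn
  have hD0 : (0:ℝ) ≤ (d:ℝ) := Nat.cast_nonneg d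
  have hc : (0:ℝ) ≤ (3:ℝ) ^ (d:ℝ) * (n:ℝ) ^ (-α) := by positivity
  have hs : (d:ℝ) < 2 * (d:ℝ) + ε := by linarith
  calc (∫⁻ y, gg1 d α ε n y)
      = ENNReal.ofReal ((3:ℝ) ^ (d:ℝ) * (n:ℝ) ^ (-α))
          * ∫⁻ y, {y : EuclideanSpace ℝ (Fin d) | 3 * (n:ℝ) < ‖y‖}.indicator
              (fun y => ENNReal.ofReal (‖y‖ ^ (-(2 * (d:ℝ) + ε)))) y := by
        rw [← lintegral_const_mul' _ _ ENNReal.ofReal_ne_top]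
        exact lintegral_congr fun y => indicator_ofReal_const_mul _ hc _ y
    _ ≤ ENNReal.ofReal ((3:ℝ) ^ (d:ℝ) * (n:ℝ) ^ (-α))
          * ENNReal.ofReal (tc d (2 * (d:ℝ) + ε) * (3 * (n:ℝ)) ^ ((d:ℝ) - (2 * (d:ℝ) + ε))) :=
        mul_le_mul_right (tail_bound' d hs (by positivity)) _
    _ = ENNReal.ofReal (((3:ℝ) ^ (d:ℝ) * (n:ℝ) ^ (-α))
          * (tc d (2 * (d:ℝ) + ε) * (3 * (n:ℝ)) ^ ((d:ℝ) - (2 * (d:ℝ) + ε)))) :=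
        (ENNReal.ofReal_mul hc).symm
    _ ≤ _ := by
        apply ENNReal.ofReal_le_ofReal
        apply le_of_eq
        rw [show (d:ℝ) - (2 * (d:ℝ) + ε) = -((d:ℝ) + ε) by ring,
          Real.mul_rpow (by norm_num) hN0.le, Real.rpow_add hN0]
        ring

lemma I2_bound (hd : 1 ≤ d) (hα0 : 0 < α) (hα2 : α < 2) (hn : 1 ≤ n) :
    (∫⁻ z, gg2 d α n z)
      ≤ ENNReal.ofReal ((4 * bc d ((d:ℝ) + α - 2)) * (n:ℝ) ^ (-α)) := by
  have hN0 : (0:ℝ) < (n:ℝ) := by exact_mod_cast Nat.lt_of_lt_of_le Nat.zero_lt_one hn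
  have hc : (0:ℝ) ≤ 4 * (n:ℝ) ^ (-(2:ℝ)) := by positivity
  have hs : (d:ℝ) + α - 2 < (d:ℝ) := by linarith
  calc (∫⁻ z, gg2 d α n z)
      = ENNReal.ofReal (4 * (n:ℝ) ^ (-(2:ℝ)))
          * ∫⁻ z, {z : EuclideanSpace ℝ (Fin d) | ‖z‖ ≤ (n:ℝ)}.indicator
              (fun z => ENNReal.ofReal (‖z‖ ^ (-((d:ℝ) + α - 2)))) z := by
        rw [← lintegral_const_mul' _ _ ENNReal.ofReal_ne_top]
        exact lintegral_congr fun z => indicator_ofReal_const_mul _ hc _ z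
    _ ≤ ENNReal.ofReal (4 * (n:ℝ) ^ (-(2:ℝ)))
          * ENNReal.ofReal (bc d ((d:ℝ) + α - 2) * (n:ℝ) ^ ((d:ℝ) - ((d:ℝ) + α - 2))) :=
        mul_le_mul_right (ball_bound' d hd hs hN0) _
    _ = ENNReal.ofReal ((4 * (n:ℝ) ^ (-(2:ℝ)))
          * (bc d ((d:ℝ) + α - 2) * (n:ℝ) ^ ((d:ℝ) - ((d:ℝ) + α - 2)))) :=
        (ENNReal.ofReal_mul hc).symm
    _ ≤ _ := by
        apply ENNReal.ofReal_le_ofReal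
        apply le_of_eq
        rw [show (d:ℝ) - ((d:ℝ) + α - 2) = 2 - α by ring]
        calc 4 * (n:ℝ) ^ (-(2:ℝ)) * (bc d ((d:ℝ) + α - 2) * (n:ℝ) ^ (2 - α))
            = 4 * bc d ((d:ℝ) + α - 2) * ((n:ℝ) ^ (-(2:ℝ)) * (n:ℝ) ^ (2 - α)) := by ring
          _ = 4 * bc d ((d:ℝ) + α - 2) * (n:ℝ) ^ (-α) := by
              rw [← Real.rpow_add hN0, show -(2:ℝ) + (2 - α) = -α by ring]

lemma I3_bound (hε0 : 0 < ε) : (∫⁻ y, gg3 d ε n y) ≤ ENNReal.ofReal (Cw d ε) := by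
  refine le_trans (lintegral_mono fun y => ?_) (lintegral_w_le d hε0)
  exact Set.indicator_le_self _ _ y

lemma I4_bound (hα0 : 0 < α) (hn : 1 ≤ n) :
    (∫⁻ z, gg4 d α n z) ≤ ENNReal.ofReal (tc d ((d:ℝ) + α) * (n:ℝ) ^ (-α)) := by
  have hN0 : (0:ℝ) < (n:ℝ) := by exact_mod_cast Nat.lt_of_lt_of_le Nat.zero_lt_one hn
  refine le_trans (tail_bound' d (by linarith) hN0) ?_
  apply ENNReal.ofReal_le_ofReal
  apply le_of_eq
  rw [show (d:ℝ) - ((d:ℝ) + α) = -α by ring]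

lemma U1_bound (hε0 : 0 < ε) : (∫⁻ x, uu1 d ε n x) ≤ ENNReal.ofReal (Cw d ε) := by
  refine le_trans (lintegral_mono fun x => ?_) (lintegral_w_le d hε0)
  exact Set.indicator_le_self _ _ x

lemma UW_bound (hε0 : 0 < ε) : (∫⁻ x, WW d ε x) ≤ ENNReal.ofReal (Cw d ε) :=
  lintegral_w_le d hε0

lemma U2_bound (hε0 : 0 < ε) (hn : 1 ≤ n) :
    (∫⁻ x, uu2 d ε n x)
      ≤ ENNReal.ofReal (((2:ℝ) ^ (-((d:ℝ) + ε)) * Vr d * 5 ^ (d:ℝ)) * (n:ℝ) ^ (-ε)) := by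
  have hN0 : (0:ℝ) < (n:ℝ) := by exact_mod_cast Nat.lt_of_lt_of_le Nat.zero_lt_one hn
  have hD0 : (0:ℝ) ≤ (d:ℝ) := Nat.cast_nonneg d
  calc (∫⁻ x, uu2 d ε n x)
      ≤ ∫⁻ x, (closedBall (0 : EuclideanSpace ℝ (Fin d)) (5 * (n:ℝ))).indicator
          (fun _ => ENNReal.ofReal ((2 * (n:ℝ)) ^ (-((d:ℝ) + ε)))) x := by
        apply lintegral_mono
        intro x
        by_cases hx : x ∈ ({x : EuclideanSpace ℝ (Fin d) | 2 * (n:ℝ) < ‖x‖} ∩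
            {x : EuclideanSpace ℝ (Fin d) | ‖x‖ ≤ 5 * (n:ℝ)})
        · have hx1 : 2 * (n:ℝ) < ‖x‖ := hx.1
          have hx2 : ‖x‖ ≤ 5 * (n:ℝ) := hx.2
          rw [uu2, Set.indicator_of_mem hx, Set.indicator_of_mem
            (by simpa [mem_closedBall_zero_iff] using hx2)]
          apply ENNReal.ofReal_le_ofReal
          calc w d ε x ≤ ‖x‖ ^ (-((d:ℝ) + ε)) := w_le_rpow d hε0.le (by nlinarith)
            _ ≤ (2 * (n:ℝ)) ^ (-((d:ℝ) + ε)) :=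
                Real.rpow_le_rpow_of_nonpos (by positivity) (le_of_lt hx1) (by linarith)
        · rw [uu2, Set.indicator_of_notMem hx]
          exact zero_le
    _ = ENNReal.ofReal ((2 * (n:ℝ)) ^ (-((d:ℝ) + ε)))
          * volume (closedBall (0 : EuclideanSpace ℝ (Fin d)) (5 * (n:ℝ))) :=
        lintegral_indicator_const measurableSet_closedBall _
    _ = ENNReal.ofReal ((2 * (n:ℝ)) ^ (-((d:ℝ) + ε)))
          * ENNReal.ofReal (Vr d * (5 * (n:ℝ)) ^ (d:ℝ)) := by
        rw [volume_closedBall_eq d (by positivity)]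
    _ = ENNReal.ofReal ((2 * (n:ℝ)) ^ (-((d:ℝ) + ε)) * (Vr d * (5 * (n:ℝ)) ^ (d:ℝ))) :=
        (ENNReal.ofReal_mul (by positivity)).symm
    _ ≤ _ := by
        apply ENNReal.ofReal_le_ofReal
        apply le_of_eq
        rw [Real.mul_rpow (by norm_num) hN0.le, Real.mul_rpow (by norm_num) hN0.le]
        calc 2 ^ (-((d:ℝ) + ε)) * (n:ℝ) ^ (-((d:ℝ) + ε)) * (Vr d * (5 ^ (d:ℝ) * (n:ℝ) ^ (d:ℝ)))
            = 2 ^ (-((d:ℝ) + ε)) * Vr d * 5 ^ (d:ℝ)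
                * ((n:ℝ) ^ (-((d:ℝ) + ε)) * (n:ℝ) ^ (d:ℝ)) := by ring
          _ = 2 ^ (-((d:ℝ) + ε)) * Vr d * 5 ^ (d:ℝ) * (n:ℝ) ^ (-ε) := by
              rw [← Real.rpow_add hN0, show -((d:ℝ) + ε) + (d:ℝ) = -ε by ring]

lemma U3_bound (hα0 : 0 < α) (hε0 : 0 < ε) (hn : 1 ≤ n) :
    (∫⁻ x, uu3 d α ε n x)
      ≤ ENNReal.ofReal (((5:ℝ) ^ ((d:ℝ) + α) * tc d (2 * (d:ℝ) + α + ε)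
          * 5 ^ (-((d:ℝ) + α + ε))) * (n:ℝ) ^ (-((d:ℝ) + α + ε))) := by
  have hN0 : (0:ℝ) < (n:ℝ) := by exact_mod_cast Nat.lt_of_lt_of_le Nat.zero_lt_one hn
  have hD0 : (0:ℝ) ≤ (d:ℝ) := Nat.cast_nonneg d
  have hc : (0:ℝ) ≤ (5:ℝ) ^ ((d:ℝ) + α) := by positivity
  have hs : (d:ℝ) < 2 * (d:ℝ) + α + ε := by linarith
  calc (∫⁻ x, uu3 d α ε n x)
      = ENNReal.ofReal ((5:ℝ) ^ ((d:ℝ) + α))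
          * ∫⁻ x, {x : EuclideanSpace ℝ (Fin d) | 5 * (n:ℝ) < ‖x‖}.indicator
              (fun x => ENNReal.ofReal (‖x‖ ^ (-(2 * (d:ℝ) + α + ε)))) x := by
        rw [← lintegral_const_mul' _ _ ENNReal.ofReal_ne_top]
        exact lintegral_congr fun x => indicator_ofReal_const_mul _ hc _ x
    _ ≤ ENNReal.ofReal ((5:ℝ) ^ ((d:ℝ) + α))
          * ENNReal.ofReal (tc d (2 * (d:ℝ) + α + ε)
              * (5 * (n:ℝ)) ^ ((d:ℝ) - (2 * (d:ℝ) + α + ε))) :=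
        mul_le_mul_right (tail_bound' d hs (by positivity)) _
    _ = ENNReal.ofReal ((5:ℝ) ^ ((d:ℝ) + α) * (tc d (2 * (d:ℝ) + α + ε)
          * (5 * (n:ℝ)) ^ ((d:ℝ) - (2 * (d:ℝ) + α + ε)))) :=
        (ENNReal.ofReal_mul hc).symm
    _ ≤ _ := by
        apply ENNReal.ofReal_le_ofReal
        apply le_of_eq
        rw [show (d:ℝ) - (2 * (d:ℝ) + α + ε) = -((d:ℝ) + α + ε) by ring,
          Real.mul_rpow (by norm_num) hN0.le]
        ring

end IntBounds

lemma master (d : ℕ) (hd : 1 ≤ d) (α ε : ℝ) (hα0 : 0 < α) (hα2 : α < 2) (hε0 : 0 < ε)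
    (n : ℕ) (hn : 1 ≤ n) (f : EuclideanSpace ℝ (Fin d) → ℝ)
    (hf : ContDiff ℝ (⊤ : ℕ∞) f) (hf01 : ∀ x, f x ∈ Set.Icc (0:ℝ) 1)
    (hf0 : ∀ x, ‖x‖ ≤ 3 * (n:ℝ) → f x = 0) (hf1 : ∀ x, 4 * (n:ℝ) < ‖x‖ → f x = 1)
    (hfd : ∀ x, ‖fderiv ℝ f x‖ ≤ 2 / (n:ℝ)) (x y : EuclideanSpace ℝ (Fin d)) :
    ENNReal.ofReal ((f y - f x) ^ 2) * ENNReal.ofReal (‖y - x‖ ^ (-((d:ℝ) + α)))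
        * WW d ε y * WW d ε x
      ≤ uu1 d ε n x * gg1 d α ε n y
        + (uu2 d ε n x * (ENNReal.ofReal ((n:ℝ) ^ (-((d:ℝ) + ε))) * gg2 d α n (y - x))
        + (uu2 d ε n x * (ENNReal.ofReal ((n:ℝ) ^ (-((d:ℝ) + α))) * gg3 d ε n y)
        + (uu2 d ε n x * (ENNReal.ofReal ((n:ℝ) ^ (-((d:ℝ) + ε))) * gg4 d α n (y - x))
        + uu3 d α ε n x * WW d ε y))) := by
  have hN0 : (0:ℝ) < (n:ℝ) := by exact_mod_cast Nat.lt_of_lt_of_le Nat.zero_lt_one hn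
  have hN1 : (1:ℝ) ≤ (n:ℝ) := by exact_mod_cast hn
  have hD0 : (0:ℝ) ≤ (d:ℝ) := Nat.cast_nonneg d
  have hA1 : (f y - f x) ^ 2 ≤ 1 := by
    obtain ⟨h1, h2⟩ := hf01 x; obtain ⟨h3, h4⟩ := hf01 y; nlinarith
  have hofA1 : ENNReal.ofReal ((f y - f x) ^ 2) ≤ 1 := by
    rw [← ENNReal.ofReal_one]; exact ENNReal.ofReal_le_ofReal hA1
  rcases le_or_gt ‖x‖ (2 * (n:ℝ)) with hx | hx
  · -- Case 1 : ‖x‖ ≤ 2n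
    have hfx : f x = 0 := hf0 x (by linarith)
    by_cases hy : ‖y‖ ≤ 3 * (n:ℝ)
    · have hfy : f y = 0 := hf0 y hy
      have hz : ENNReal.ofReal ((f y - f x) ^ 2) = 0 := by rw [hfx, hfy]; norm_num
      rw [hz, zero_mul, zero_mul, zero_mul]; exact zero_le
    · push_neg at hy
      refine le_trans ?_ (self_le_add_right _ _)
      have hy0 : (0:ℝ) < ‖y‖ := by linarith
      have hnsn := norm_sub_norm_le y x
      have hP : (0:ℝ) < ‖y - x‖ := by linarith
      have h1 : (n:ℝ) ≤ ‖y - x‖ := by linarith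
      have h2 : ‖y‖ / 3 ≤ ‖y - x‖ := by linarith
      have hstep1 : ‖y - x‖ ^ (-((d:ℝ) + α))
          ≤ 3 ^ (d:ℝ) * (n:ℝ) ^ (-α) * ‖y‖ ^ (-(d:ℝ)) := by
        have e2 : (n:ℝ) ^ α * (‖y‖ / 3) ^ (d:ℝ) ≤ ‖y - x‖ ^ ((d:ℝ) + α) := by
          rw [Real.rpow_add hP]
          calc (n:ℝ) ^ α * (‖y‖ / 3) ^ (d:ℝ) = (‖y‖ / 3) ^ (d:ℝ) * (n:ℝ) ^ α := by ring
            _ ≤ ‖y - x‖ ^ (d:ℝ) * ‖y - x‖ ^ α :=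
              mul_le_mul (Real.rpow_le_rpow (by positivity) h2 hD0)
                (Real.rpow_le_rpow (by positivity) h1 hα0.le) (by positivity) (by positivity)
        have hy3 : (0:ℝ) < (n:ℝ) ^ α * (‖y‖ / 3) ^ (d:ℝ) := by positivity
        calc ‖y - x‖ ^ (-((d:ℝ) + α)) = (‖y - x‖ ^ ((d:ℝ) + α))⁻¹ := by
              rw [Real.rpow_neg hP.le]
          _ ≤ ((n:ℝ) ^ α * (‖y‖ / 3) ^ (d:ℝ))⁻¹ := by
              exact inv_anti₀ hy3 e2
          _ = 3 ^ (d:ℝ) * (n:ℝ) ^ (-α) * ‖y‖ ^ (-(d:ℝ)) := by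
              have hna : (n:ℝ) ^ α ≠ 0 := by positivity
              have hy1 : ‖y‖ ^ (d:ℝ) ≠ 0 := by positivity
              have h31 : (3:ℝ) ^ (d:ℝ) ≠ 0 := by positivity
              rw [Real.div_rpow hy0.le (by norm_num : (0:ℝ) ≤ 3),
                Real.rpow_neg hN0.le, Real.rpow_neg hy0.le]
              field_simp
      have hstep2 : w d ε y ≤ ‖y‖ ^ (-((d:ℝ) + ε)) := w_le_rpow d hε0.le hy0
      have hBW : ENNReal.ofReal (‖y - x‖ ^ (-((d:ℝ) + α))) * WW d ε y
          ≤ ENNReal.ofReal ((3:ℝ) ^ (d:ℝ) * (n:ℝ) ^ (-α) * ‖y‖ ^ (-(2 * (d:ℝ) + ε))) := by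
        rw [WW, ← ENNReal.ofReal_mul (by positivity)]
        apply ENNReal.ofReal_le_ofReal
        calc ‖y - x‖ ^ (-((d:ℝ) + α)) * w d ε y
            ≤ (3 ^ (d:ℝ) * (n:ℝ) ^ (-α) * ‖y‖ ^ (-(d:ℝ))) * ‖y‖ ^ (-((d:ℝ) + ε)) :=
              mul_le_mul hstep1 hstep2 (w_nonneg d ε y) (by positivity)
          _ = 3 ^ (d:ℝ) * (n:ℝ) ^ (-α) * (‖y‖ ^ (-(d:ℝ)) * ‖y‖ ^ (-((d:ℝ) + ε))) := by ring
          _ = 3 ^ (d:ℝ) * (n:ℝ) ^ (-α) * ‖y‖ ^ (-(2 * (d:ℝ) + ε)) := by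
              rw [← Real.rpow_add hy0, show -(d:ℝ) + -((d:ℝ) + ε) = -(2 * (d:ℝ) + ε) by ring]
      have hu : uu1 d ε n x = WW d ε x :=
        Set.indicator_of_mem (show x ∈ {x : EuclideanSpace ℝ (Fin d) | ‖x‖ ≤ 2 * (n:ℝ)} from hx) _
      have hg : gg1 d α ε n y
          = ENNReal.ofReal ((3:ℝ) ^ (d:ℝ) * (n:ℝ) ^ (-α) * ‖y‖ ^ (-(2 * (d:ℝ) + ε))) :=
        Set.indicator_of_mem (show y ∈ {y : EuclideanSpace ℝ (Fin d) | 3 * (n:ℝ) < ‖y‖} from hy) _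
      calc ENNReal.ofReal ((f y - f x) ^ 2) * ENNReal.ofReal (‖y - x‖ ^ (-((d:ℝ) + α)))
            * WW d ε y * WW d ε x
          = ENNReal.ofReal ((f y - f x) ^ 2)
            * (ENNReal.ofReal (‖y - x‖ ^ (-((d:ℝ) + α))) * WW d ε y) * WW d ε x := by ring
        _ ≤ 1 * ENNReal.ofReal ((3:ℝ) ^ (d:ℝ) * (n:ℝ) ^ (-α) * ‖y‖ ^ (-(2 * (d:ℝ) + ε)))
            * WW d ε x := by gcongr
        _ = uu1 d ε n x * gg1 d α ε n y := by rw [one_mul, hu, hg, mul_comm]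
  · rcases le_or_gt ‖x‖ (5 * (n:ℝ)) with hx5 | hx5
    · -- Case 2 : 2n < ‖x‖ ≤ 5n
      have hu : uu2 d ε n x = WW d ε x :=
        Set.indicator_of_mem (show x ∈ ({x : EuclideanSpace ℝ (Fin d) | 2 * (n:ℝ) < ‖x‖} ∩
          {x : EuclideanSpace ℝ (Fin d) | ‖x‖ ≤ 5 * (n:ℝ)}) from ⟨hx, hx5⟩) _
      rcases le_or_gt ‖y - x‖ (n:ℝ) with hxy | hxy
      · -- subcase 2a
        refine le_trans ?_ (le_trans (self_le_add_right _ _) (self_le_add_left _ _))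
        by_cases hyx : y = x
        · have hz : ENNReal.ofReal ((f y - f x) ^ 2) = 0 := by rw [hyx]; norm_num
          rw [hz, zero_mul, zero_mul, zero_mul]; exact zero_le
        · have hP : (0:ℝ) < ‖y - x‖ := by
            rw [norm_pos_iff]; exact sub_ne_zero.mpr hyx
          have hnsn := norm_sub_norm_le x y
          rw [norm_sub_rev x y] at hnsn
          have hyn : (n:ℝ) < ‖y‖ := by linarith
          have hmvt : |f y - f x| ≤ 2 / (n:ℝ) * ‖y - x‖ := by
            have := convex_univ.norm_image_sub_le_of_norm_fderiv_le
              (fun z _ => (hf.differentiable (by simp)).differentiableAt)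
              (fun z _ => hfd z) (mem_univ x) (mem_univ y)
            simpa using this
          have hA : (f y - f x) ^ 2 ≤ 4 * (n:ℝ) ^ (-(2:ℝ)) * ‖y - x‖ ^ (2:ℕ) := by
            have h2 : (f y - f x) ^ 2 = |f y - f x| ^ 2 := (sq_abs _).symm
            have h3 : |f y - f x| ^ 2 ≤ (2 / (n:ℝ) * ‖y - x‖) ^ 2 :=
              pow_le_pow_left₀ (abs_nonneg _) hmvt 2
            have h4 : (2 / (n:ℝ) * ‖y - x‖) ^ 2 = 4 * (n:ℝ) ^ (-(2:ℝ)) * ‖y - x‖ ^ (2:ℕ) := by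
              rw [show -(2:ℝ) = -((2:ℕ):ℝ) by norm_num, Real.rpow_neg hN0.le,
                Real.rpow_natCast]
              field_simp
              ring
            rw [h2, ← h4]; exact h3
          have hAB : ENNReal.ofReal ((f y - f x) ^ 2)
                * ENNReal.ofReal (‖y - x‖ ^ (-((d:ℝ) + α)))
              ≤ ENNReal.ofReal (4 * (n:ℝ) ^ (-(2:ℝ)) * ‖y - x‖ ^ (-((d:ℝ) + α - 2))) := by
            rw [← ENNReal.ofReal_mul (by positivity)]
            apply ENNReal.ofReal_le_ofReal
            calc (f y - f x) ^ 2 * ‖y - x‖ ^ (-((d:ℝ) + α))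
                ≤ (4 * (n:ℝ) ^ (-(2:ℝ)) * ‖y - x‖ ^ (2:ℕ)) * ‖y - x‖ ^ (-((d:ℝ) + α)) :=
                  mul_le_mul_of_nonneg_right hA (by positivity)
              _ = 4 * (n:ℝ) ^ (-(2:ℝ)) * (‖y - x‖ ^ ((2:ℕ):ℝ) * ‖y - x‖ ^ (-((d:ℝ) + α))) := by
                  rw [Real.rpow_natCast]; ring
              _ = 4 * (n:ℝ) ^ (-(2:ℝ)) * ‖y - x‖ ^ (-((d:ℝ) + α - 2)) := by
                  rw [← Real.rpow_add hP, show ((2:ℕ):ℝ) + -((d:ℝ) + α) = -((d:ℝ) + α - 2) by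
                    push_cast; ring]
          have hwy : WW d ε y ≤ ENNReal.ofReal ((n:ℝ) ^ (-((d:ℝ) + ε))) := by
            apply ENNReal.ofReal_le_ofReal
            calc w d ε y ≤ ‖y‖ ^ (-((d:ℝ) + ε)) := w_le_rpow d hε0.le (by linarith)
              _ ≤ (n:ℝ) ^ (-((d:ℝ) + ε)) :=
                Real.rpow_le_rpow_of_nonpos hN0 hyn.le (by linarith)
          have hg : gg2 d α n (y - x)
              = ENNReal.ofReal (4 * (n:ℝ) ^ (-(2:ℝ)) * ‖y - x‖ ^ (-((d:ℝ) + α - 2))) :=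
            Set.indicator_of_mem (show y - x ∈ {z : EuclideanSpace ℝ (Fin d) | ‖z‖ ≤ (n:ℝ)} from hxy) _
          calc ENNReal.ofReal ((f y - f x) ^ 2) * ENNReal.ofReal (‖y - x‖ ^ (-((d:ℝ) + α)))
                * WW d ε y * WW d ε x
              ≤ ENNReal.ofReal (4 * (n:ℝ) ^ (-(2:ℝ)) * ‖y - x‖ ^ (-((d:ℝ) + α - 2)))
                * ENNReal.ofReal ((n:ℝ) ^ (-((d:ℝ) + ε))) * WW d ε x := by
                gcongr
            _ = uu2 d ε n x * (ENNReal.ofReal ((n:ℝ) ^ (-((d:ℝ) + ε))) * gg2 d α n (y - x)) := by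
                rw [hu, hg]; ring
      · rcases le_or_gt ‖y‖ (n:ℝ) with hyn | hyn
        · -- subcase 2b
          refine le_trans ?_ (le_trans (self_le_add_right _ _)
            (le_trans (self_le_add_left _ _) (self_le_add_left _ _)))
          have hB : ENNReal.ofReal (‖y - x‖ ^ (-((d:ℝ) + α)))
              ≤ ENNReal.ofReal ((n:ℝ) ^ (-((d:ℝ) + α))) := by
            apply ENNReal.ofReal_le_ofReal
            exact Real.rpow_le_rpow_of_nonpos hN0 hxy.le (by linarith)
          have hg : gg3 d ε n y = WW d ε y :=
            Set.indicator_of_mem (show y ∈ {y : EuclideanSpace ℝ (Fin d) | ‖y‖ ≤ (n:ℝ)} from hyn) _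
          calc ENNReal.ofReal ((f y - f x) ^ 2) * ENNReal.ofReal (‖y - x‖ ^ (-((d:ℝ) + α)))
                * WW d ε y * WW d ε x
              ≤ 1 * ENNReal.ofReal ((n:ℝ) ^ (-((d:ℝ) + α))) * WW d ε y * WW d ε x := by
                gcongr
            _ = uu2 d ε n x * (ENNReal.ofReal ((n:ℝ) ^ (-((d:ℝ) + α))) * gg3 d ε n y) := by
                rw [hu, hg]; ring
        · -- subcase 2c
          refine le_trans ?_ (le_trans (self_le_add_right _ _)
            (le_trans (self_le_add_left _ _) (le_trans (self_le_add_left _ _)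
              (self_le_add_left _ _))))
          have hwy : WW d ε y ≤ ENNReal.ofReal ((n:ℝ) ^ (-((d:ℝ) + ε))) := by
            apply ENNReal.ofReal_le_ofReal
            calc w d ε y ≤ ‖y‖ ^ (-((d:ℝ) + ε)) := w_le_rpow d hε0.le (by linarith)
              _ ≤ (n:ℝ) ^ (-((d:ℝ) + ε)) :=
                Real.rpow_le_rpow_of_nonpos hN0 hyn.le (by linarith)
          have hg : gg4 d α n (y - x) = ENNReal.ofReal (‖y - x‖ ^ (-((d:ℝ) + α))) :=
            Set.indicator_of_mem (show y - x ∈ {z : EuclideanSpace ℝ (Fin d) | (n:ℝ) < ‖z‖} from hxy) _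
          calc ENNReal.ofReal ((f y - f x) ^ 2) * ENNReal.ofReal (‖y - x‖ ^ (-((d:ℝ) + α)))
                * WW d ε y * WW d ε x
              ≤ 1 * ENNReal.ofReal (‖y - x‖ ^ (-((d:ℝ) + α)))
                * ENNReal.ofReal ((n:ℝ) ^ (-((d:ℝ) + ε))) * WW d ε x := by
                gcongr
            _ = uu2 d ε n x * (ENNReal.ofReal ((n:ℝ) ^ (-((d:ℝ) + ε))) * gg4 d α n (y - x)) := by
                rw [hu, hg]; ring
    · -- Case 3 : 5n < ‖x‖
      refine le_trans ?_ (le_trans (self_le_add_left _ _) (le_trans (self_le_add_left _ _)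
        (le_trans (self_le_add_left _ _) (self_le_add_left _ _))))
      have hfx : f x = 1 := hf1 x (by linarith)
      by_cases hy : 4 * (n:ℝ) < ‖y‖
      · have hfy : f y = 1 := hf1 y hy
        have hz : ENNReal.ofReal ((f y - f x) ^ 2) = 0 := by rw [hfx, hfy]; norm_num
        rw [hz, zero_mul, zero_mul, zero_mul]; exact zero_le
      · push_neg at hy
        have hx0 : (0:ℝ) < ‖x‖ := by linarith
        have hnsn := norm_sub_norm_le x y
        rw [norm_sub_rev x y] at hnsn
        have hP5 : ‖x‖ / 5 ≤ ‖y - x‖ := by linarith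
        have hB : ‖y - x‖ ^ (-((d:ℝ) + α)) ≤ 5 ^ ((d:ℝ) + α) * ‖x‖ ^ (-((d:ℝ) + α)) := by
          calc ‖y - x‖ ^ (-((d:ℝ) + α)) ≤ (‖x‖ / 5) ^ (-((d:ℝ) + α)) :=
                Real.rpow_le_rpow_of_nonpos (by positivity) hP5 (by linarith)
            _ = 5 ^ ((d:ℝ) + α) * ‖x‖ ^ (-((d:ℝ) + α)) := by
                rw [Real.div_rpow hx0.le (by norm_num : (0:ℝ) ≤ 5),
                  Real.rpow_neg (by norm_num : (0:ℝ) ≤ 5), div_inv_eq_mul]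
                ring
        have hwx : w d ε x ≤ ‖x‖ ^ (-((d:ℝ) + ε)) := w_le_rpow d hε0.le hx0
        have hBW : ENNReal.ofReal (‖y - x‖ ^ (-((d:ℝ) + α))) * WW d ε x
            ≤ ENNReal.ofReal ((5:ℝ) ^ ((d:ℝ) + α) * ‖x‖ ^ (-(2 * (d:ℝ) + α + ε))) := by
          rw [WW, ← ENNReal.ofReal_mul (by positivity)]
          apply ENNReal.ofReal_le_ofReal
          calc ‖y - x‖ ^ (-((d:ℝ) + α)) * w d ε x
              ≤ (5 ^ ((d:ℝ) + α) * ‖x‖ ^ (-((d:ℝ) + α))) * ‖x‖ ^ (-((d:ℝ) + ε)) :=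
                mul_le_mul hB hwx (w_nonneg d ε x) (by positivity)
            _ = 5 ^ ((d:ℝ) + α) * (‖x‖ ^ (-((d:ℝ) + α)) * ‖x‖ ^ (-((d:ℝ) + ε))) := by ring
            _ = 5 ^ ((d:ℝ) + α) * ‖x‖ ^ (-(2 * (d:ℝ) + α + ε)) := by
                rw [← Real.rpow_add hx0,
                  show -((d:ℝ) + α) + -((d:ℝ) + ε) = -(2 * (d:ℝ) + α + ε) by ring]
        have hg : uu3 d α ε n x
            = ENNReal.ofReal ((5:ℝ) ^ ((d:ℝ) + α) * ‖x‖ ^ (-(2 * (d:ℝ) + α + ε))) :=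
          Set.indicator_of_mem (show x ∈ {x : EuclideanSpace ℝ (Fin d) | 5 * (n:ℝ) < ‖x‖} from hx5) _
        calc ENNReal.ofReal ((f y - f x) ^ 2) * ENNReal.ofReal (‖y - x‖ ^ (-((d:ℝ) + α)))
              * WW d ε y * WW d ε x
            = ENNReal.ofReal ((f y - f x) ^ 2)
              * (ENNReal.ofReal (‖y - x‖ ^ (-((d:ℝ) + α))) * WW d ε x) * WW d ε y := by ring
          _ ≤ 1 * ENNReal.ofReal ((5:ℝ) ^ ((d:ℝ) + α) * ‖x‖ ^ (-(2 * (d:ℝ) + α + ε)))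
              * WW d ε y := by gcongr
          _ = uu3 d α ε n x * WW d ε y := by rw [one_mul, hg]

lemma real_combine {N Ka Kb ea eb e : ℝ} (hN : 1 ≤ N) (hKa : 0 ≤ Ka) (hKb : 0 ≤ Kb)
    (he : ea + eb ≤ e) : (Ka * N ^ ea) * (Kb * N ^ eb) ≤ (Ka * Kb) * N ^ e := by
  have h0 : (0:ℝ) < N := lt_of_lt_of_le one_pos hN
  calc (Ka * N ^ ea) * (Kb * N ^ eb) = (Ka * Kb) * (N ^ ea * N ^ eb) := by ring
    _ = (Ka * Kb) * N ^ (ea + eb) := by rw [← Real.rpow_add h0]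
    _ ≤ (Ka * Kb) * N ^ e :=
        mul_le_mul_of_nonneg_left (Real.rpow_le_rpow_of_exponent_le hN he)
          (mul_nonneg hKa hKb)

lemma combine_bound {U V : ℝ≥0∞} {N Ka Kb ea eb e : ℝ}
    (hU : U ≤ ENNReal.ofReal (Ka * N ^ ea)) (hV : V ≤ ENNReal.ofReal (Kb * N ^ eb))
    (hN : 1 ≤ N) (hKa : 0 ≤ Ka) (hKb : 0 ≤ Kb) (he : ea + eb ≤ e) :
    U * V ≤ ENNReal.ofReal ((Ka * Kb) * N ^ e) := by
  have h0 : (0:ℝ) < N := lt_of_lt_of_le one_pos hN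
  calc U * V ≤ ENNReal.ofReal (Ka * N ^ ea) * ENNReal.ofReal (Kb * N ^ eb) :=
        mul_le_mul' hU hV
    _ = ENNReal.ofReal ((Ka * N ^ ea) * (Kb * N ^ eb)) :=
        (ENNReal.ofReal_mul (by positivity)).symm
    _ ≤ _ := ENNReal.ofReal_le_ofReal (real_combine hN hKa hKb he)

noncomputable def CC (d : ℕ) (α ε : ℝ) : ℝ :=
  Cw d ε * ((3:ℝ) ^ (d:ℝ) * tc d (2 * (d:ℝ) + ε) * 3 ^ (-((d:ℝ) + ε)))
  + ((2:ℝ) ^ (-((d:ℝ) + ε)) * Vr d * 5 ^ (d:ℝ)) * (1 * (4 * bc d ((d:ℝ) + α - 2)))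
  + ((2:ℝ) ^ (-((d:ℝ) + ε)) * Vr d * 5 ^ (d:ℝ)) * (1 * Cw d ε)
  + ((2:ℝ) ^ (-((d:ℝ) + ε)) * Vr d * 5 ^ (d:ℝ)) * (1 * tc d ((d:ℝ) + α))
  + ((5:ℝ) ^ ((d:ℝ) + α) * tc d (2 * (d:ℝ) + α + ε) * 5 ^ (-((d:ℝ) + α + ε))) * Cw d ε

lemma core (d : ℕ) (hd : 1 ≤ d) (α ε : ℝ) (hα0 : 0 < α) (hα2 : α < 2) (hε0 : 0 < ε)
    (n : ℕ) (hn : 1 ≤ n) (f : EuclideanSpace ℝ (Fin d) → ℝ)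
    (hf : ContDiff ℝ (⊤ : ℕ∞) f) (hf01 : ∀ x, f x ∈ Set.Icc (0:ℝ) 1)
    (hf0 : ∀ x, ‖x‖ ≤ 3 * (n:ℝ) → f x = 0) (hf1 : ∀ x, 4 * (n:ℝ) < ‖x‖ → f x = 1)
    (hfd : ∀ x, ‖fderiv ℝ f x‖ ≤ 2 / (n:ℝ)) :
    (∫⁻ x, (∫⁻ y, ENNReal.ofReal ((f y - f x) ^ 2 * ‖y - x‖ ^ (-((d:ℝ) + α)) * w d ε y))
        * ENNReal.ofReal (w d ε x))
      ≤ ENNReal.ofReal (CC d α ε * (n:ℝ) ^ (-((d:ℝ) + α + ε))) := by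
  have hN0 : (0:ℝ) < (n:ℝ) := by exact_mod_cast Nat.lt_of_lt_of_le Nat.zero_lt_one hn
  have hN1 : (1:ℝ) ≤ (n:ℝ) := by exact_mod_cast hn
  have hD0 : (0:ℝ) ≤ (d:ℝ) := Nat.cast_nonneg d
  -- bounds on the integrals
  have hU1 : (∫⁻ x, uu1 d ε n x) ≤ ENNReal.ofReal (Cw d ε * (n:ℝ) ^ (0:ℝ)) := by
    simpa [Real.rpow_zero] using U1_bound (d := d) (n := n) hε0
  have hUW : (∫⁻ x, WW d ε x) ≤ ENNReal.ofReal (Cw d ε * (n:ℝ) ^ (0:ℝ)) := by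
    simpa [Real.rpow_zero] using UW_bound (d := d) hε0
  have hI3 : (∫⁻ y, gg3 d ε n y) ≤ ENNReal.ofReal (Cw d ε * (n:ℝ) ^ (0:ℝ)) := by
    simpa [Real.rpow_zero] using I3_bound (d := d) (n := n) hε0
  have hU2 := U2_bound (d := d) (n := n) hε0 hn
  have hU3 := U3_bound (d := d) (n := n) hα0 hε0 hn
  have hI1 := I1_bound (d := d) (n := n) hα0 hε0 hn
  have hI2 := I2_bound (n := n) hd hα0 hα2 hn
  have hI4 := I4_bound (d := d) (n := n) hα0 hn
  have hκε : ENNReal.ofReal ((n:ℝ) ^ (-((d:ℝ) + ε)))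
      ≤ ENNReal.ofReal ((1:ℝ) * (n:ℝ) ^ (-((d:ℝ) + ε))) := by rw [one_mul]
  have hκα : ENNReal.ofReal ((n:ℝ) ^ (-((d:ℝ) + α)))
      ≤ ENNReal.ofReal ((1:ℝ) * (n:ℝ) ^ (-((d:ℝ) + α))) := by rw [one_mul]
  -- finiteness
  have hI1top : (∫⁻ y, gg1 d α ε n y) ≠ ⊤ := ne_top_of_le_ne_top ENNReal.ofReal_ne_top hI1
  have hI2top : (∫⁻ z, gg2 d α n z) ≠ ⊤ := ne_top_of_le_ne_top ENNReal.ofReal_ne_top hI2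
  have hI3top : (∫⁻ y, gg3 d ε n y) ≠ ⊤ := ne_top_of_le_ne_top ENNReal.ofReal_ne_top hI3
  have hI4top : (∫⁻ z, gg4 d α n z) ≠ ⊤ := ne_top_of_le_ne_top ENNReal.ofReal_ne_top hI4
  have hIWtop : (∫⁻ y, WW d ε y) ≠ ⊤ := ne_top_of_le_ne_top ENNReal.ofReal_ne_top hUW
  have huu1top : ∀ x, uu1 d ε n x ≠ ⊤ := fun x =>
    ne_top_of_le_ne_top ENNReal.ofReal_ne_top (Set.indicator_le_self _ _ x)
  have huu2top : ∀ x, uu2 d ε n x ≠ ⊤ := fun x =>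
    ne_top_of_le_ne_top ENNReal.ofReal_ne_top (Set.indicator_le_self _ _ x)
  have huu3top : ∀ x, uu3 d α ε n x ≠ ⊤ := fun x =>
    ne_top_of_le_ne_top ENNReal.ofReal_ne_top (Set.indicator_le_self _ _ x)
  -- nonnegativity of the constants
  have hKb1 : (0:ℝ) ≤ (3:ℝ) ^ (d:ℝ) * tc d (2 * (d:ℝ) + ε) * 3 ^ (-((d:ℝ) + ε)) :=
    mul_nonneg (mul_nonneg (by positivity) (tc_nonneg d (by linarith))) (by positivity)
  have hKa2 : (0:ℝ) ≤ (2:ℝ) ^ (-((d:ℝ) + ε)) * Vr d * 5 ^ (d:ℝ) :=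
    mul_nonneg (mul_nonneg (by positivity) (Vr_nonneg d)) (by positivity)
  have hKb2 : (0:ℝ) ≤ 1 * (4 * bc d ((d:ℝ) + α - 2)) :=
    mul_nonneg zero_le_one (mul_nonneg (by norm_num) (bc_nonneg d (by linarith)))
  have hKb3 : (0:ℝ) ≤ 1 * Cw d ε := mul_nonneg zero_le_one (Cw_nonneg d ε)
  have hKb4 : (0:ℝ) ≤ 1 * tc d ((d:ℝ) + α) :=
    mul_nonneg zero_le_one (tc_nonneg d (by linarith))
  have hKa5 : (0:ℝ) ≤ (5:ℝ) ^ ((d:ℝ) + α) * tc d (2 * (d:ℝ) + α + ε)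
      * 5 ^ (-((d:ℝ) + α + ε)) :=
    mul_nonneg (mul_nonneg (by positivity) (tc_nonneg d (by linarith))) (by positivity)
  -- inner combinations
  have hV2 : ENNReal.ofReal ((n:ℝ) ^ (-((d:ℝ) + ε))) * (∫⁻ z, gg2 d α n z)
      ≤ ENNReal.ofReal ((1 * (4 * bc d ((d:ℝ) + α - 2)))
          * (n:ℝ) ^ (-((d:ℝ) + ε) + -α)) :=
    combine_bound hκε hI2 hN1 zero_le_one
      (mul_nonneg (by norm_num) (bc_nonneg d (by linarith))) le_rfl
  have hV3 : ENNReal.ofReal ((n:ℝ) ^ (-((d:ℝ) + α))) * (∫⁻ y, gg3 d ε n y)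
      ≤ ENNReal.ofReal ((1 * Cw d ε) * (n:ℝ) ^ (-((d:ℝ) + α) + 0)) :=
    combine_bound hκα hI3 hN1 zero_le_one (Cw_nonneg d ε) le_rfl
  have hV4 : ENNReal.ofReal ((n:ℝ) ^ (-((d:ℝ) + ε))) * (∫⁻ z, gg4 d α n z)
      ≤ ENNReal.ofReal ((1 * tc d ((d:ℝ) + α)) * (n:ℝ) ^ (-((d:ℝ) + ε) + -α)) :=
    combine_bound hκε hI4 hN1 zero_le_one (tc_nonneg d (by linarith)) le_rfl
  have hV2top : ENNReal.ofReal ((n:ℝ) ^ (-((d:ℝ) + ε))) * (∫⁻ z, gg2 d α n z) ≠ ⊤ :=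
    ENNReal.mul_ne_top ENNReal.ofReal_ne_top hI2top
  have hV3top : ENNReal.ofReal ((n:ℝ) ^ (-((d:ℝ) + α))) * (∫⁻ y, gg3 d ε n y) ≠ ⊤ :=
    ENNReal.mul_ne_top ENNReal.ofReal_ne_top hI3top
  have hV4top : ENNReal.ofReal ((n:ℝ) ^ (-((d:ℝ) + ε))) * (∫⁻ z, gg4 d α n z) ≠ ⊤ :=
    ENNReal.mul_ne_top ENNReal.ofReal_ne_top hI4top
  -- the five final term bounds
  have hT1 : (∫⁻ x, uu1 d ε n x) * (∫⁻ y, gg1 d α ε n y)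
      ≤ ENNReal.ofReal ((Cw d ε * ((3:ℝ) ^ (d:ℝ) * tc d (2 * (d:ℝ) + ε) * 3 ^ (-((d:ℝ) + ε))))
          * (n:ℝ) ^ (-((d:ℝ) + α + ε))) :=
    combine_bound hU1 hI1 hN1 (Cw_nonneg d ε) hKb1 (by linarith)
  have hT2 : (∫⁻ x, uu2 d ε n x)
        * (ENNReal.ofReal ((n:ℝ) ^ (-((d:ℝ) + ε))) * (∫⁻ z, gg2 d α n z))
      ≤ ENNReal.ofReal ((((2:ℝ) ^ (-((d:ℝ) + ε)) * Vr d * 5 ^ (d:ℝ))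
          * (1 * (4 * bc d ((d:ℝ) + α - 2)))) * (n:ℝ) ^ (-((d:ℝ) + α + ε))) :=
    combine_bound hU2 hV2 hN1 hKa2 hKb2 (by linarith)
  have hT3 : (∫⁻ x, uu2 d ε n x)
        * (ENNReal.ofReal ((n:ℝ) ^ (-((d:ℝ) + α))) * (∫⁻ y, gg3 d ε n y))
      ≤ ENNReal.ofReal ((((2:ℝ) ^ (-((d:ℝ) + ε)) * Vr d * 5 ^ (d:ℝ)) * (1 * Cw d ε))
          * (n:ℝ) ^ (-((d:ℝ) + α + ε))) :=
    combine_bound hU2 hV3 hN1 hKa2 hKb3 (by linarith)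
  have hT4 : (∫⁻ x, uu2 d ε n x)
        * (ENNReal.ofReal ((n:ℝ) ^ (-((d:ℝ) + ε))) * (∫⁻ z, gg4 d α n z))
      ≤ ENNReal.ofReal ((((2:ℝ) ^ (-((d:ℝ) + ε)) * Vr d * 5 ^ (d:ℝ)) * (1 * tc d ((d:ℝ) + α)))
          * (n:ℝ) ^ (-((d:ℝ) + α + ε))) :=
    combine_bound hU2 hV4 hN1 hKa2 hKb4 (by linarith)
  have hT5 : (∫⁻ x, uu3 d α ε n x) * (∫⁻ y, WW d ε y)
      ≤ ENNReal.ofReal ((((5:ℝ) ^ ((d:ℝ) + α) * tc d (2 * (d:ℝ) + α + ε)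
          * 5 ^ (-((d:ℝ) + α + ε))) * Cw d ε) * (n:ℝ) ^ (-((d:ℝ) + α + ε))) := by
    have := combine_bound hU3 hUW hN1 hKa5 (Cw_nonneg d ε) (by linarith :
      -((d:ℝ) + α + ε) + 0 ≤ -((d:ℝ) + α + ε))
    exact this
  -- nonnegativity of products
  have hrp : (0:ℝ) ≤ (n:ℝ) ^ (-((d:ℝ) + α + ε)) := Real.rpow_nonneg hN0.le _
  have hP1 : (0:ℝ) ≤ (Cw d ε * ((3:ℝ) ^ (d:ℝ) * tc d (2 * (d:ℝ) + ε) * 3 ^ (-((d:ℝ) + ε))))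
      * (n:ℝ) ^ (-((d:ℝ) + α + ε)) := mul_nonneg (mul_nonneg (Cw_nonneg d ε) hKb1) hrp
  have hP2 : (0:ℝ) ≤ (((2:ℝ) ^ (-((d:ℝ) + ε)) * Vr d * 5 ^ (d:ℝ))
      * (1 * (4 * bc d ((d:ℝ) + α - 2)))) * (n:ℝ) ^ (-((d:ℝ) + α + ε)) :=
    mul_nonneg (mul_nonneg hKa2 hKb2) hrp
  have hP3 : (0:ℝ) ≤ (((2:ℝ) ^ (-((d:ℝ) + ε)) * Vr d * 5 ^ (d:ℝ)) * (1 * Cw d ε))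
      * (n:ℝ) ^ (-((d:ℝ) + α + ε)) := mul_nonneg (mul_nonneg hKa2 hKb3) hrp
  have hP4 : (0:ℝ) ≤ (((2:ℝ) ^ (-((d:ℝ) + ε)) * Vr d * 5 ^ (d:ℝ)) * (1 * tc d ((d:ℝ) + α)))
      * (n:ℝ) ^ (-((d:ℝ) + α + ε)) := mul_nonneg (mul_nonneg hKa2 hKb4) hrp
  have hP5 : (0:ℝ) ≤ (((5:ℝ) ^ ((d:ℝ) + α) * tc d (2 * (d:ℝ) + α + ε)
      * 5 ^ (-((d:ℝ) + α + ε))) * Cw d ε) * (n:ℝ) ^ (-((d:ℝ) + α + ε)) :=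
    mul_nonneg (mul_nonneg hKa5 (Cw_nonneg d ε)) hrp
  -- measurability of the inner summands
  have M1 : ∀ x : EuclideanSpace ℝ (Fin d),
      Measurable fun y => uu1 d ε n x * gg1 d α ε n y :=
    fun x => (meas_gg1 d α ε n).const_mul _
  have M2 : ∀ x : EuclideanSpace ℝ (Fin d), Measurable fun y =>
      uu2 d ε n x * (ENNReal.ofReal ((n:ℝ) ^ (-((d:ℝ) + ε))) * gg2 d α n (y - x)) :=
    fun x => ((((meas_gg2 d α n).comp (measurable_id.sub_const x)).const_mul
      _).const_mul _)
  have M3 : ∀ x : EuclideanSpace ℝ (Fin d), Measurable fun y =>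
      uu2 d ε n x * (ENNReal.ofReal ((n:ℝ) ^ (-((d:ℝ) + α))) * gg3 d ε n y) :=
    fun x => (((meas_gg3 d ε n).const_mul _).const_mul _)
  have M4 : ∀ x : EuclideanSpace ℝ (Fin d), Measurable fun y =>
      uu2 d ε n x * (ENNReal.ofReal ((n:ℝ) ^ (-((d:ℝ) + ε))) * gg4 d α n (y - x)) :=
    fun x => ((((meas_gg4 d α n).comp (measurable_id.sub_const x)).const_mul
      _).const_mul _)
  -- measurability of the outer summands
  have N1 : Measurable fun x => uu1 d ε n x * (∫⁻ y, gg1 d α ε n y) :=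
    (meas_uu1 d ε n).mul_const _
  have N2 : Measurable fun x => uu2 d ε n x
      * (ENNReal.ofReal ((n:ℝ) ^ (-((d:ℝ) + ε))) * (∫⁻ z, gg2 d α n z)) :=
    (meas_uu2 d ε n).mul_const _
  have N3 : Measurable fun x => uu2 d ε n x
      * (ENNReal.ofReal ((n:ℝ) ^ (-((d:ℝ) + α))) * (∫⁻ y, gg3 d ε n y)) :=
    (meas_uu2 d ε n).mul_const _
  have N4 : Measurable fun x => uu2 d ε n x
      * (ENNReal.ofReal ((n:ℝ) ^ (-((d:ℝ) + ε))) * (∫⁻ z, gg4 d α n z)) :=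
    (meas_uu2 d ε n).mul_const _
  calc (∫⁻ x, (∫⁻ y, ENNReal.ofReal ((f y - f x) ^ 2 * ‖y - x‖ ^ (-((d:ℝ) + α)) * w d ε y))
        * ENNReal.ofReal (w d ε x))
      = ∫⁻ x, ∫⁻ y, ENNReal.ofReal ((f y - f x) ^ 2)
          * ENNReal.ofReal (‖y - x‖ ^ (-((d:ℝ) + α))) * WW d ε y * WW d ε x := by
        apply lintegral_congr; intro x
        rw [← lintegral_mul_const' (ENNReal.ofReal (w d ε x)) _ ENNReal.ofReal_ne_top]
        apply lintegral_congr; intro y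
        rw [ENNReal.ofReal_mul (by positivity), ENNReal.ofReal_mul (by positivity)]
        rfl
    _ ≤ ∫⁻ x, ∫⁻ y, (uu1 d ε n x * gg1 d α ε n y
        + (uu2 d ε n x * (ENNReal.ofReal ((n:ℝ) ^ (-((d:ℝ) + ε))) * gg2 d α n (y - x))
        + (uu2 d ε n x * (ENNReal.ofReal ((n:ℝ) ^ (-((d:ℝ) + α))) * gg3 d ε n y)
        + (uu2 d ε n x * (ENNReal.ofReal ((n:ℝ) ^ (-((d:ℝ) + ε))) * gg4 d α n (y - x))
        + uu3 d α ε n x * WW d ε y)))) :=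
        lintegral_mono fun x => lintegral_mono fun y =>
          master d hd α ε hα0 hα2 hε0 n hn f hf hf01 hf0 hf1 hfd x y
    _ = ∫⁻ x, (uu1 d ε n x * (∫⁻ y, gg1 d α ε n y)
        + (uu2 d ε n x * (ENNReal.ofReal ((n:ℝ) ^ (-((d:ℝ) + ε))) * (∫⁻ z, gg2 d α n z))
        + (uu2 d ε n x * (ENNReal.ofReal ((n:ℝ) ^ (-((d:ℝ) + α))) * (∫⁻ y, gg3 d ε n y))
        + (uu2 d ε n x * (ENNReal.ofReal ((n:ℝ) ^ (-((d:ℝ) + ε))) * (∫⁻ z, gg4 d α n z))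
        + uu3 d α ε n x * (∫⁻ y, WW d ε y))))) := by
        apply lintegral_congr; intro x
        rw [lintegral_add_left (M1 x), lintegral_add_left (M2 x), lintegral_add_left (M3 x),
          lintegral_add_left (M4 x)]
        congr 1
        · exact lintegral_const_mul' _ _ (huu1top x)
        congr 1
        · rw [lintegral_const_mul' _ _ (huu2top x),
            lintegral_const_mul' _ _ ENNReal.ofReal_ne_top,
            lintegral_sub_right_eq_self (gg2 d α n) x]
        congr 1
        · rw [lintegral_const_mul' _ _ (huu2top x),
            lintegral_const_mul' _ _ ENNReal.ofReal_ne_top]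
        congr 1
        · rw [lintegral_const_mul' _ _ (huu2top x),
            lintegral_const_mul' _ _ ENNReal.ofReal_ne_top,
            lintegral_sub_right_eq_self (gg4 d α n) x]
        · exact lintegral_const_mul' _ _ (huu3top x)
    _ = (∫⁻ x, uu1 d ε n x) * (∫⁻ y, gg1 d α ε n y)
        + ((∫⁻ x, uu2 d ε n x)
            * (ENNReal.ofReal ((n:ℝ) ^ (-((d:ℝ) + ε))) * (∫⁻ z, gg2 d α n z))
        + ((∫⁻ x, uu2 d ε n x)
            * (ENNReal.ofReal ((n:ℝ) ^ (-((d:ℝ) + α))) * (∫⁻ y, gg3 d ε n y))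
        + ((∫⁻ x, uu2 d ε n x)
            * (ENNReal.ofReal ((n:ℝ) ^ (-((d:ℝ) + ε))) * (∫⁻ z, gg4 d α n z))
        + (∫⁻ x, uu3 d α ε n x) * (∫⁻ y, WW d ε y)))) := by
        rw [lintegral_add_left N1, lintegral_add_left N2, lintegral_add_left N3,
          lintegral_add_left N4]
        rw [lintegral_mul_const' _ _ hI1top, lintegral_mul_const' _ _ hV2top,
          lintegral_mul_const' _ _ hV3top, lintegral_mul_const' _ _ hV4top,
          lintegral_mul_const' _ _ hIWtop]
    _ ≤ ENNReal.ofReal ((Cw d ε * ((3:ℝ) ^ (d:ℝ) * tc d (2 * (d:ℝ) + ε)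
            * 3 ^ (-((d:ℝ) + ε)))) * (n:ℝ) ^ (-((d:ℝ) + α + ε)))
        + (ENNReal.ofReal ((((2:ℝ) ^ (-((d:ℝ) + ε)) * Vr d * 5 ^ (d:ℝ))
            * (1 * (4 * bc d ((d:ℝ) + α - 2)))) * (n:ℝ) ^ (-((d:ℝ) + α + ε)))
        + (ENNReal.ofReal ((((2:ℝ) ^ (-((d:ℝ) + ε)) * Vr d * 5 ^ (d:ℝ)) * (1 * Cw d ε))
            * (n:ℝ) ^ (-((d:ℝ) + α + ε)))
        + (ENNReal.ofReal ((((2:ℝ) ^ (-((d:ℝ) + ε)) * Vr d * 5 ^ (d:ℝ))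
            * (1 * tc d ((d:ℝ) + α))) * (n:ℝ) ^ (-((d:ℝ) + α + ε)))
        + ENNReal.ofReal ((((5:ℝ) ^ ((d:ℝ) + α) * tc d (2 * (d:ℝ) + α + ε)
            * 5 ^ (-((d:ℝ) + α + ε))) * Cw d ε) * (n:ℝ) ^ (-((d:ℝ) + α + ε)))))) :=
        add_le_add hT1 (add_le_add hT2 (add_le_add hT3 (add_le_add hT4 hT5)))
    _ = ENNReal.ofReal (CC d α ε * (n:ℝ) ^ (-((d:ℝ) + α + ε))) := by
        rw [← ENNReal.ofReal_add hP4 hP5, ← ENNReal.ofReal_add hP3 (add_nonneg hP4 hP5),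
          ← ENNReal.ofReal_add hP2 (add_nonneg hP3 (add_nonneg hP4 hP5)),
          ← ENNReal.ofReal_add hP1 (add_nonneg hP2 (add_nonneg hP3 (add_nonneg hP4 hP5)))]
        congr 1
        simp only [CC]
        ring

end Stmt13Aux

open Stmt13Aux in
/-- Central estimate in the proof that the Poincaré inequality fails for ε < α. -/
theorem stmt_13 (d : ℕ) (hd : 1 ≤ d) (α ε : ℝ) (hα0 : 0 < α) (hα2 : α < 2)
    (hε0 : 0 < ε) (hεα : ε < α) :
    ∃ C > 0, ∀ n : ℕ, 1 ≤ n → ∀ f : EuclideanSpace ℝ (Fin d) → ℝ,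
      ContDiff ℝ (⊤ : ℕ∞) f → (∀ x, f x ∈ Set.Icc (0 : ℝ) 1) →
      (∀ x, ‖x‖ ≤ 3 * (n : ℝ) → f x = 0) → (∀ x, 4 * (n : ℝ) < ‖x‖ → f x = 1) →
      (∀ x, ‖fderiv ℝ f x‖ ≤ 2 / (n : ℝ)) →
      (∫⁻ x, (∫⁻ y, ENNReal.ofReal ((f y - f x) ^ 2 * ‖y - x‖ ^ (-((d : ℝ) + α)) *
            Real.exp (-((1 : ℝ) / 2 * Real.log ((1 + ‖y‖ ^ 2) ^ ((d : ℝ) + ε))))) ∂volume) *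
          ENNReal.ofReal
            (Real.exp (-((1 : ℝ) / 2 * Real.log ((1 + ‖x‖ ^ 2) ^ ((d : ℝ) + ε))))) ∂volume) ≤
        ENNReal.ofReal (C * (n : ℝ) ^ (-((d : ℝ) + α + ε))) := by
  have hD0 : (0:ℝ) ≤ (d:ℝ) := Nat.cast_nonneg d
  have hKb1 : (0:ℝ) ≤ (3:ℝ) ^ (d:ℝ) * tc d (2 * (d:ℝ) + ε) * 3 ^ (-((d:ℝ) + ε)) :=
    mul_nonneg (mul_nonneg (by positivity) (tc_nonneg d (by linarith))) (by positivity)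
  have hKa2 : (0:ℝ) ≤ (2:ℝ) ^ (-((d:ℝ) + ε)) * Vr d * 5 ^ (d:ℝ) :=
    mul_nonneg (mul_nonneg (by positivity) (Vr_nonneg d)) (by positivity)
  have hKb2 : (0:ℝ) ≤ 1 * (4 * bc d ((d:ℝ) + α - 2)) :=
    mul_nonneg zero_le_one (mul_nonneg (by norm_num) (bc_nonneg d (by linarith)))
  have hKb3 : (0:ℝ) ≤ 1 * Cw d ε := mul_nonneg zero_le_one (Cw_nonneg d ε)
  have hKb4 : (0:ℝ) ≤ 1 * tc d ((d:ℝ) + α) :=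
    mul_nonneg zero_le_one (tc_nonneg d (by linarith))
  have hKa5 : (0:ℝ) ≤ (5:ℝ) ^ ((d:ℝ) + α) * tc d (2 * (d:ℝ) + α + ε)
      * 5 ^ (-((d:ℝ) + α + ε)) :=
    mul_nonneg (mul_nonneg (by positivity) (tc_nonneg d (by linarith))) (by positivity)
  have hCC : 0 ≤ CC d α ε := by
    unfold CC
    have h1 := mul_nonneg (Cw_nonneg d ε) hKb1
    have h2 := mul_nonneg hKa2 hKb2
    have h3 := mul_nonneg hKa2 hKb3
    have h4 := mul_nonneg hKa2 hKb4
    have h5 := mul_nonneg hKa5 (Cw_nonneg d ε)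
    linarith
  refine ⟨CC d α ε + 1, by linarith, ?_⟩
  intro n hn f hf hf01 hf0 hf1 hfd
  have hN0 : (0:ℝ) < (n:ℝ) := by exact_mod_cast Nat.lt_of_lt_of_le Nat.zero_lt_one hn
  have hrp : (0:ℝ) ≤ (n:ℝ) ^ (-((d:ℝ) + α + ε)) := Real.rpow_nonneg hN0.le _
  calc (∫⁻ x, (∫⁻ y, ENNReal.ofReal ((f y - f x) ^ 2 * ‖y - x‖ ^ (-((d : ℝ) + α)) *
            Real.exp (-((1 : ℝ) / 2 * Real.log ((1 + ‖y‖ ^ 2) ^ ((d : ℝ) + ε))))) ∂volume) *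
          ENNReal.ofReal
            (Real.exp (-((1 : ℝ) / 2 * Real.log ((1 + ‖x‖ ^ 2) ^ ((d : ℝ) + ε))))) ∂volume)
      = (∫⁻ x, (∫⁻ y, ENNReal.ofReal ((f y - f x) ^ 2 * ‖y - x‖ ^ (-((d:ℝ) + α)) * w d ε y))
          * ENNReal.ofReal (w d ε x)) := by
        simp only [exp_eq_w]
    _ ≤ ENNReal.ofReal (CC d α ε * (n:ℝ) ^ (-((d:ℝ) + α + ε))) :=
        core d hd α ε hα0 hα2 hε0 n hn f hf hf01 hf0 hf1 hfd
    _ ≤ ENNReal.ofReal ((CC d α ε + 1) * (n:ℝ) ^ (-((d:ℝ) + α + ε))) := by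
        apply ENNReal.ofReal_le_ofReal
        nlinarith
end

section
/- Let d ≥ 1 and ε > 0. For n ≥ 1 let f_n : ℝ^d → [0,1] be smooth with f_n = 0 on {|x| ≤ 3n} and f_n = 1 on {|x| > 4n}, and let μ(dx) = C_ε (1+|x|²)^{-(d+ε)} dx be the normalized probability measure. Then there is c > 0 such that for all n large enough, ∫ (f_n - μ(f_n))² dμ ≥ c n^{-(d+2ε)}. -/
open MeasureTheory Real Set Filter
open scoped ENNReal NNReal Topology

set_option maxHeartbeats 1000000

/-- Lower bound for the variance of the cutoff functions f_n under the polynomial measure. -/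
theorem stmt_14 (d : ℕ) (hd : 1 ≤ d) (ε : ℝ) (hε : 0 < ε) :
    ∃ c > 0, ∃ N : ℕ, ∀ n : ℕ, N ≤ n → ∀ f : EuclideanSpace ℝ (Fin d) → ℝ,
      ContDiff ℝ (⊤ : ℕ∞) f → (∀ x, f x ∈ Set.Icc (0 : ℝ) 1) →
      (∀ x, ‖x‖ ≤ 3 * (n : ℝ) → f x = 0) → (∀ x, 4 * (n : ℝ) < ‖x‖ → f x = 1) →
      c * (n : ℝ) ^ (-((d : ℝ) + 2 * ε)) ≤
        ∫ x, (f x - ∫ z, f z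
            ∂(volume.withDensity fun z : EuclideanSpace ℝ (Fin d) =>
              ENNReal.ofReal
                ((∫ w : EuclideanSpace ℝ (Fin d),
                    (1 + ‖w‖ ^ 2) ^ (-((d : ℝ) + ε)) ∂volume)⁻¹ *
                  (1 + ‖z‖ ^ 2) ^ (-((d : ℝ) + ε))))) ^ 2
          ∂(volume.withDensity fun x : EuclideanSpace ℝ (Fin d) =>
            ENNReal.ofReal
              ((∫ w : EuclideanSpace ℝ (Fin d),
                  (1 + ‖w‖ ^ 2) ^ (-((d : ℝ) + ε)) ∂volume)⁻¹ *
                (1 + ‖x‖ ^ 2) ^ (-((d : ℝ) + ε)))) := by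
  classical
  haveI : Nontrivial (EuclideanSpace ℝ (Fin d)) := by
    have : 0 < Module.finrank ℝ (EuclideanSpace ℝ (Fin d)) := by
      simpa [finrank_euclideanSpace] using Nat.lt_of_succ_le hd
    exact Module.nontrivial_of_finrank_pos (R := ℝ) this
  set g : EuclideanSpace ℝ (Fin d) → ℝ := fun w => (1 + ‖w‖ ^ 2) ^ (-((d : ℝ) + ε)) with hgdef
  have hg_pos : ∀ x, 0 < g x := fun x => rpow_pos_of_pos (by positivity) _
  have hg_int : Integrable g := by
    have hlt : (Module.finrank ℝ (EuclideanSpace ℝ (Fin d)) : ℝ) < 2 * ((d:ℝ) + ε) := by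
      simp only [finrank_euclideanSpace, Fintype.card_fin]
      have : (0:ℝ) ≤ d := Nat.cast_nonneg d
      linarith
    have := integrable_rpow_neg_one_add_norm_sq (E := EuclideanSpace ℝ (Fin d)) (μ := volume) hlt
    convert this using 3
    ring
  set I := ∫ w : EuclideanSpace ℝ (Fin d), g w ∂volume with hIdef
  have hI_pos : 0 < I := by
    rw [hIdef]
    refine (integral_pos_iff_support_of_nonneg (fun x => (hg_pos x).le) hg_int).mpr ?_
    have hsupp : Function.support g = univ :=
      eq_univ_of_forall fun x => Function.mem_support.mpr (hg_pos x).ne'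
    rw [hsupp]
    calc (0:ℝ≥0∞) < volume (Metric.ball (0 : EuclideanSpace ℝ (Fin d)) 1) :=
          Metric.measure_ball_pos _ _ one_pos
      _ ≤ volume univ := measure_mono (subset_univ _)
  set ρ : EuclideanSpace ℝ (Fin d) → ℝ≥0∞ := fun x =>
    ENNReal.ofReal (I⁻¹ * (1 + ‖x‖ ^ 2) ^ (-((d : ℝ) + ε))) with hρdef
  have hρ_meas : Measurable ρ := by fun_prop
  set μ := volume.withDensity ρ with hμdef
  haveI hprob : IsProbabilityMeasure μ := by
    constructor
    rw [hμdef, withDensity_apply _ MeasurableSet.univ, Measure.restrict_univ]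
    have h1 : (∫⁻ x, ρ x) = ENNReal.ofReal (∫ x, I⁻¹ * g x) := by
      rw [ofReal_integral_eq_lintegral_ofReal (hg_int.const_mul _)
        (ae_of_all _ fun x => mul_nonneg (inv_nonneg.mpr hI_pos.le) (hg_pos x).le)]
    rw [h1, integral_const_mul, ← hIdef, inv_mul_cancel₀ hI_pos.ne', ENNReal.ofReal_one]
  -- tail measure tends to zero
  have htail : Tendsto (fun n : ℕ =>
      μ (Metric.closedBall (0:EuclideanSpace ℝ (Fin d)) (3*(n:ℝ)))ᶜ) atTop (𝓝 0) := by
    have h0 : (⋂ n : ℕ, (Metric.closedBall (0:EuclideanSpace ℝ (Fin d)) (3*(n:ℝ)))ᶜ) = ∅ := by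
      ext x
      simp only [mem_iInter, mem_compl_iff, Metric.mem_closedBall, dist_zero_right, not_le,
        mem_empty_iff_false, iff_false, not_forall, not_lt]
      obtain ⟨k, hk⟩ := exists_nat_gt (‖x‖ / 3)
      exact ⟨k, by nlinarith [norm_nonneg x]⟩
    have hmono : Antitone (fun n : ℕ =>
        (Metric.closedBall (0:EuclideanSpace ℝ (Fin d)) (3*(n:ℝ)))ᶜ) := by
      intro a b hab
      refine compl_subset_compl.mpr (Metric.closedBall_subset_closedBall ?_)
      have : (a:ℝ) ≤ b := Nat.cast_le.mpr hab
      linarith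
    have := tendsto_measure_iInter_atTop (μ := μ)
      (fun n => measurableSet_closedBall.compl.nullMeasurableSet) hmono ⟨0, measure_ne_top μ _⟩
    rw [h0] at this
    simpa [Function.comp_def] using this
  have hev : ∀ᶠ n : ℕ in atTop,
      μ (Metric.closedBall (0:EuclideanSpace ℝ (Fin d)) (3*(n:ℝ)))ᶜ < 1/2 :=
    htail.eventually_lt_const (by norm_num)
  obtain ⟨N₀, hN₀⟩ := eventually_atTop.mp hev
  set v := volume (Metric.ball (0:EuclideanSpace ℝ (Fin d)) 1) with hvdef
  have hv_pos : 0 < v.toReal :=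
    ENNReal.toReal_pos (Metric.measure_ball_pos _ _ one_pos).ne' measure_ball_lt_top.ne
  have h54 : (0:ℝ) < 5^d - 4^d := by
    have : (4:ℝ)^d < 5^d := by
      apply pow_lt_pow_left₀ (by norm_num) (by norm_num)
      omega
    linarith
  have h26 : (0:ℝ) < (26:ℝ) ^ (-((d:ℝ)+ε)) := rpow_pos_of_pos (by norm_num) _
  have hc_pos : (0:ℝ) < (1/4) * I⁻¹ * (26:ℝ) ^ (-((d:ℝ)+ε)) * ((5:ℝ)^d - 4^d) * v.toReal :=
    mul_pos (mul_pos (mul_pos (mul_pos (by norm_num) (inv_pos.mpr hI_pos)) h26) h54) hv_pos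
  refine ⟨_, hc_pos, max N₀ 1, ?_⟩
  intro n hn f hf h01 h03 h14
  have hn1 : 1 ≤ n := le_trans (le_max_right _ _) hn
  have hN0n : N₀ ≤ n := le_trans (le_max_left _ _) hn
  have hn1' : (1:ℝ) ≤ (n:ℝ) := by exact_mod_cast hn1
  have hn0 : (0:ℝ) < (n:ℝ) := lt_of_lt_of_le one_pos hn1'
  set m := ∫ z, f z ∂μ with hmdef
  clear_value m
  have hfc : Continuous f := hf.continuous
  have hf_int : Integrable f μ := by
    refine ⟨hfc.aestronglyMeasurable,
      HasFiniteIntegral.of_bounded (C := 1) (ae_of_all _ fun x => ?_)⟩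
    rw [Real.norm_eq_abs, abs_le]
    exact ⟨by linarith [(h01 x).1], (h01 x).2⟩
  have hm0 : 0 ≤ m := by
    rw [hmdef]; exact integral_nonneg fun x => (h01 x).1
  have hm_half : m ≤ 1/2 := by
    have hmeas : MeasurableSet (Metric.closedBall (0:EuclideanSpace ℝ (Fin d)) (3*(n:ℝ)))ᶜ :=
      measurableSet_closedBall.compl
    have hle : m ≤ ∫ x, ((Metric.closedBall (0:EuclideanSpace ℝ (Fin d)) (3*(n:ℝ)))ᶜ).indicator
        (fun _ => (1:ℝ)) x ∂μ := by
      rw [hmdef]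
      refine integral_mono hf_int ((integrable_const (1:ℝ)).indicator hmeas) fun x => ?_
      by_cases hx : x ∈ (Metric.closedBall (0:EuclideanSpace ℝ (Fin d)) (3*(n:ℝ)))ᶜ
      · rw [indicator_of_mem hx]; exact (h01 x).2
      · rw [indicator_of_notMem hx, h03 x]
        simp only [mem_compl_iff, Metric.mem_closedBall, dist_zero_right, not_not] at hx
        exact hx
    rw [integral_indicator_const _ hmeas, smul_eq_mul, mul_one] at hle
    have h2 : μ (Metric.closedBall (0:EuclideanSpace ℝ (Fin d)) (3*(n:ℝ)))ᶜ ≤ 1/2 :=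
      (hN₀ n hN0n).le
    have h3 := ENNReal.toReal_mono (show (1:ℝ≥0∞)/2 ≠ ⊤ by simp) h2
    have h4 : ((1:ℝ≥0∞)/2).toReal = 1/2 := by norm_num
    rw [Measure.real_def] at hle
    linarith
  set S := Metric.ball (0:EuclideanSpace ℝ (Fin d)) (5*(n:ℝ)) \
    Metric.closedBall (0:EuclideanSpace ℝ (Fin d)) (4*(n:ℝ)) with hSdef
  clear_value S
  have hS_meas : MeasurableSet S := by
    rw [hSdef]; exact measurableSet_ball.diff measurableSet_closedBall
  have hsq_int : Integrable (fun x => (f x - m)^2) μ := by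
    refine ⟨((hfc.sub continuous_const).pow 2).aestronglyMeasurable,
      HasFiniteIntegral.of_bounded (C := 1) (ae_of_all _ fun x => ?_)⟩
    rw [Real.norm_eq_abs, abs_le]
    constructor
    · nlinarith [sq_nonneg (f x - m)]
    · nlinarith [(h01 x).1, (h01 x).2, hm0, hm_half]
  have hpt : ∀ x, S.indicator (fun _ => (1-m)^2) x ≤ (f x - m)^2 := by
    intro x
    by_cases hx : x ∈ S
    · rw [indicator_of_mem hx]
      rw [hSdef] at hx
      have h4 : 4*(n:ℝ) < ‖x‖ := by
        have := hx.2
        simpa only [Metric.mem_closedBall, dist_zero_right, not_le] using this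
      rw [h14 x h4]
    · rw [indicator_of_notMem hx]; positivity
  have hint_le : ∫ x, S.indicator (fun _ => (1-m)^2) x ∂μ ≤ ∫ x, (f x - m)^2 ∂μ :=
    integral_mono ((integrable_const _).indicator hS_meas) hsq_int hpt
  rw [integral_indicator_const _ hS_meas, smul_eq_mul] at hint_le
  -- lower bound on μ S
  have hμS : ENNReal.ofReal (I⁻¹ * (26*(n:ℝ)^2) ^ (-((d:ℝ)+ε))) * volume S ≤ μ S := by
    rw [hμdef, withDensity_apply _ hS_meas]
    calc ENNReal.ofReal (I⁻¹ * (26*(n:ℝ)^2) ^ (-((d:ℝ)+ε))) * volume S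
        = ∫⁻ _x in S, ENNReal.ofReal (I⁻¹ * (26*(n:ℝ)^2) ^ (-((d:ℝ)+ε))) ∂volume := by
          rw [setLIntegral_const]
      _ ≤ ∫⁻ x in S, ρ x ∂volume := by
          refine setLIntegral_mono hρ_meas fun x hx => ?_
          rw [hSdef] at hx
          have hxlt : ‖x‖ < 5*(n:ℝ) := by
            have := hx.1
            simpa only [Metric.mem_ball, dist_zero_right] using this
          have hb : (1:ℝ) + ‖x‖^2 ≤ 26*(n:ℝ)^2 := by nlinarith [norm_nonneg x]
          have hexp : -((d:ℝ)+ε) ≤ 0 := by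
            have : (0:ℝ) ≤ d := Nat.cast_nonneg d
            linarith
          have hg' : (26*(n:ℝ)^2) ^ (-((d:ℝ)+ε)) ≤ (1+‖x‖^2) ^ (-((d:ℝ)+ε)) :=
            rpow_le_rpow_of_nonpos (by positivity) hb hexp
          exact ENNReal.ofReal_le_ofReal
            (mul_le_mul_of_nonneg_left hg' (inv_nonneg.mpr hI_pos.le))
  have hsub : Metric.closedBall (0:EuclideanSpace ℝ (Fin d)) (4*(n:ℝ)) ⊆
      Metric.ball (0:EuclideanSpace ℝ (Fin d)) (5*(n:ℝ)) :=
    Metric.closedBall_subset_ball (by linarith)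
  have hfr : Module.finrank ℝ (EuclideanSpace ℝ (Fin d)) = d := by
    simp [finrank_euclideanSpace]
  have hvolS_toReal : (volume S).toReal = ((5*(n:ℝ))^d - (4*(n:ℝ))^d) * v.toReal := by
    have h45 : ((4*(n:ℝ))^d : ℝ) ≤ (5*(n:ℝ))^d :=
      pow_le_pow_left₀ (by positivity) (by linarith) d
    rw [hSdef, measure_diff hsub measurableSet_closedBall.nullMeasurableSet
        measure_closedBall_lt_top.ne,
      Measure.addHaar_ball _ _ (by positivity), Measure.addHaar_closedBall _ _ (by positivity),
      hfr, ← hvdef,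
      ENNReal.toReal_sub_of_le
        (mul_le_mul_left (ENNReal.ofReal_le_ofReal h45) v)
        (ENNReal.mul_ne_top ENNReal.ofReal_ne_top measure_ball_lt_top.ne),
      ENNReal.toReal_mul, ENNReal.toReal_mul,
      ENNReal.toReal_ofReal (by positivity), ENNReal.toReal_ofReal (by positivity)]
    ring
  have hμS_toReal : I⁻¹ * (26*(n:ℝ)^2) ^ (-((d:ℝ)+ε)) * (((5*(n:ℝ))^d - (4*(n:ℝ))^d) * v.toReal)
      ≤ (μ S).toReal := by
    have h5 := ENNReal.toReal_mono (measure_ne_top μ S) hμS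
    rwa [ENNReal.toReal_mul,
      ENNReal.toReal_ofReal
        (mul_nonneg (inv_nonneg.mpr hI_pos.le) (rpow_nonneg (by positivity) _)),
      hvolS_toReal] at h5
  have quarter : (1/4:ℝ) ≤ (1-m)^2 := by
    have hhalf : (1/2:ℝ) ≤ 1 - m := by linarith
    calc (1/4:ℝ) = (1/2)^2 := by norm_num
      _ ≤ (1-m)^2 := by
          apply pow_le_pow_left₀ (by norm_num) hhalf
  -- algebraic identity
  have e1 : (26*(n:ℝ)^2) ^ (-((d:ℝ)+ε))
      = (26:ℝ) ^ (-((d:ℝ)+ε)) * (n:ℝ) ^ ((2:ℝ) * (-((d:ℝ)+ε))) := by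
    rw [Real.mul_rpow (by norm_num) (by positivity), ← Real.rpow_natCast (n:ℝ) 2,
      ← Real.rpow_mul hn0.le]
    norm_num
  have e2 : ((5*(n:ℝ))^d - (4*(n:ℝ))^d) = ((5:ℝ)^d - 4^d) * (n:ℝ)^((d:ℝ)) := by
    rw [mul_pow, mul_pow, Real.rpow_natCast]
    ring
  have e3 : (n:ℝ) ^ ((2:ℝ) * (-((d:ℝ)+ε))) * (n:ℝ) ^ ((d:ℝ)) = (n:ℝ) ^ (-((d:ℝ)+2*ε)) := by
    rw [← Real.rpow_add hn0]
    congr 1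
    ring
  have halg : (1/4) * I⁻¹ * (26:ℝ)^(-((d:ℝ)+ε)) * ((5:ℝ)^d - 4^d) * v.toReal
        * (n:ℝ)^(-((d:ℝ)+2*ε))
      = (1/4) * (I⁻¹ * (26*(n:ℝ)^2) ^ (-((d:ℝ)+ε))
        * (((5*(n:ℝ))^d - (4*(n:ℝ))^d) * v.toReal)) := by
    rw [e1, e2, ← e3]
    ring
  have hAB_nonneg : (0:ℝ) ≤ I⁻¹ * (26*(n:ℝ)^2) ^ (-((d:ℝ)+ε))
      * (((5*(n:ℝ))^d - (4*(n:ℝ))^d) * v.toReal) := by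
    have h45 : ((4*(n:ℝ))^d : ℝ) ≤ (5*(n:ℝ))^d :=
      pow_le_pow_left₀ (by positivity) (by linarith) d
    have := hI_pos
    have := hv_pos
    refine mul_nonneg (mul_nonneg (inv_nonneg.mpr hI_pos.le) (rpow_nonneg (by positivity) _))
      (mul_nonneg (by linarith) hv_pos.le)
  calc (1/4) * I⁻¹ * (26:ℝ)^(-((d:ℝ)+ε)) * ((5:ℝ)^d - 4^d) * v.toReal * (n:ℝ)^(-((d:ℝ)+2*ε))
      = (1/4) * (I⁻¹ * (26*(n:ℝ)^2) ^ (-((d:ℝ)+ε))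
        * (((5*(n:ℝ))^d - (4*(n:ℝ))^d) * v.toReal)) := halg
    _ ≤ (1-m)^2 * (μ S).toReal :=
        mul_le_mul quarter hμS_toReal hAB_nonneg (sq_nonneg _)
    _ = (μ S).toReal * (1-m)^2 := mul_comm _ _
    _ ≤ ∫ x, (f x - m)^2 ∂μ := hint_le
end
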